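/- arXiv:0906.3465 — 5 statements merged into one kernel-verified Lean document; each statement's English description precedes it below -/
import Mathlib

section
/- Let X ∈ ℝ^{n×p}, ρ > 0, and let XᵀX = V·diag(λ₁,…,λ_p)·Vᵀ be a spectral decomposition with V ∈ ℝ^{p×p} orthogonal and λ₁ ≥ … ≥ λ_p ≥ 0 (the λ_i are the squared singular values d_i² of X). Then Δ̂ = V·diag(θ₁,…,θ_p)·Vᵀ with θ_i = (λ_i + √(λ_i² + 16nρ))/(2n) is symmetric positive definite and is the unique maximizer, over all symmetric positive definite Δ ∈ ℝ^{p×p}, of the L2-penalized Gaussian log-likelihood ℓ(Δ) = (n/2)·log det(Δ⁻¹) − (1/2)·tr(XᵀX·Δ⁻¹) − ρ·tr(Δ⁻¹·Δ⁻¹). -/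
open Matrix

/-!
Substitute `Ω = Δ⁻¹` and `Ω̂ = Δ̂⁻¹`. Since `θᵢ` is the positive root of `n θ² − λᵢ θ − 4ρ = 0`,
the sample matrix splits as `XᵀX = n Δ̂ − 4ρ Ω̂`, and completing the square in the penalty gives
`ℓ(Δ) = (n/2)(log det Ω − tr(Δ̂ Ω)) − ρ‖Ω − Ω̂‖_F² + ρ‖Ω̂‖_F²`.
The first term is the Gaussian log-likelihood, maximised at `Ω = Ω̂` by `log x ≤ x − 1` applied to
the eigenvalues of `Δ̂^{1/2} Ω Δ̂^{1/2}`; the Frobenius term vanishes only at `Ω = Ω̂`.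
-/

lemma quadratic_root_pos {a b c x : ℝ} (ha : 0 < a) (hc : 0 < c)
    (hx : x = (b + √(b ^ 2 + 4 * a * c)) / (2 * a)) : 0 < x := by
  have : -b < √(b ^ 2 + 4 * a * c) := Real.lt_sqrt_of_sq_lt (by nlinarith)
  rw [hx]
  exact div_pos (by linarith) (by positivity)

lemma quadratic_root_eq {a b c x : ℝ} (ha : 0 < a) (hc : 0 < c)
    (hx : x = (b + √(b ^ 2 + 4 * a * c)) / (2 * a)) : b = a * x - c * x⁻¹ := by
  have hx0 := quadratic_root_pos ha hc hx
  have hsq : √(b ^ 2 + 4 * a * c) ^ 2 = b ^ 2 + 4 * a * c := Real.sq_sqrt (by positivity)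
  have hroot : a * x ^ 2 = b * x + c := by
    rw [hx]
    generalize √(b ^ 2 + 4 * a * c) = s at hsq
    field_simp
    linear_combination hsq
  field_simp
  linear_combination -hroot

namespace Matrix

variable {m : Type*} [Fintype m]

lemma trace_mul_self_nonneg {M : Matrix m m ℝ} (hM : Mᵀ = M) : 0 ≤ (M * M).trace := by
  simpa [conjTranspose_eq_transpose_of_trivial, hM] using
    (posSemidef_conjTranspose_mul_self M).trace_nonneg

lemma trace_mul_self_eq_zero_iff {M : Matrix m m ℝ} (hM : Mᵀ = M) :
    (M * M).trace = 0 ↔ M = 0 := by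
  simpa [conjTranspose_eq_transpose_of_trivial, hM] using
    trace_conjTranspose_mul_self_eq_zero_iff (A := M)

lemma half_trace_mul_add_trace_mul_self {S A Ω₀ : Matrix m m ℝ} {c ρ : ℝ}
    (hS : S = c • A - (4 * ρ) • Ω₀) (Ω : Matrix m m ℝ) :
    (1 / 2) * (S * Ω).trace + ρ * (Ω * Ω).trace
      = (c / 2) * (A * Ω).trace + ρ * ((Ω - Ω₀) * (Ω - Ω₀)).trace - ρ * (Ω₀ * Ω₀).trace := by
  subst hS
  simp only [sub_mul, mul_sub, smul_mul, trace_sub, trace_smul, smul_eq_mul]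
  rw [trace_mul_comm Ω₀ Ω]
  ring

variable [DecidableEq m]

section Orthogonal

variable {V : Matrix m m ℝ}

lemma posDef_mul_diagonal_mul_transpose (hV : V * Vᵀ = 1) {d : m → ℝ} (hd : ∀ i, 0 < d i) :
    (V * diagonal d * Vᵀ).PosDef := by
  have hVT : IsUnit Vᵀ :=
    (isUnit_iff_isUnit_det _).2 (isUnit_det_of_right_inverse (mul_eq_one_comm.1 hV))
  simpa [conjTranspose_eq_transpose_of_trivial] using
    (PosDef.diagonal hd).conjTranspose_mul_mul_same (mulVec_injective_iff_isUnit.2 hVT)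

lemma inv_mul_diagonal_mul_transpose (hV : V * Vᵀ = 1) {d : m → ℝ} (hd : ∀ i, d i ≠ 0) :
    (V * diagonal d * Vᵀ)⁻¹ = V * diagonal d⁻¹ * Vᵀ := by
  apply inv_eq_right_inv
  have hdd : diagonal d * diagonal d⁻¹ = 1 := by
    rw [diagonal_mul_diagonal, ← diagonal_one]
    exact congrArg diagonal (funext fun i => mul_inv_cancel₀ (hd i))
  calc V * diagonal d * Vᵀ * (V * diagonal d⁻¹ * Vᵀ)
      = V * (diagonal d * (Vᵀ * V) * diagonal d⁻¹) * Vᵀ := by simp only [mul_assoc]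
    _ = 1 := by rw [mul_eq_one_comm.1 hV, mul_one, hdd, mul_one, hV]

lemma mul_diagonal_sub_inv_mul_transpose (hV : V * Vᵀ = 1) {d : m → ℝ} (hd : ∀ i, d i ≠ 0)
    (a c : ℝ) :
    V * diagonal (a • d - c • d⁻¹) * Vᵀ
      = a • (V * diagonal d * Vᵀ) - c • (V * diagonal d * Vᵀ)⁻¹ := by
  have hdiag : diagonal (a • d - c • d⁻¹) = a • diagonal d - c • diagonal d⁻¹ := by
    rw [← diagonal_smul, ← diagonal_smul, diagonal_sub]
    rfl
  rw [inv_mul_diagonal_mul_transpose hV hd, hdiag]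
  simp only [mul_sub, sub_mul, mul_smul_comm, smul_mul]

end Orthogonal

lemma PosDef.log_det_le_trace_sub_card {B : Matrix m m ℝ} (hB : B.PosDef) :
    Real.log B.det ≤ B.trace - Fintype.card m := by
  have hH := hB.isHermitian
  rw [hH.det_eq_prod_eigenvalues, hH.trace_eq_sum_eigenvalues]
  simp only [RCLike.ofReal_real_eq_id, id]
  rw [Real.log_prod fun i _ => (hB.eigenvalues_pos i).ne']
  calc ∑ i, Real.log (hH.eigenvalues i) ≤ ∑ i, (hH.eigenvalues i - 1) :=
        Finset.sum_le_sum fun i _ => Real.log_le_sub_one_of_pos (hB.eigenvalues_pos i)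
    _ = _ := by simp [Finset.sum_sub_distrib]

open scoped MatrixOrder in
lemma PosDef.log_det_sub_trace_mul_le {A B : Matrix m m ℝ} (hA : A.PosDef) (hB : B.PosDef) :
    Real.log B.det - (A * B).trace ≤ Real.log A⁻¹.det - Fintype.card m := by
  set R := CFC.sqrt A
  have hRR : R * R = A := CFC.sqrt_mul_sqrt_self A hA.posSemidef.nonneg
  have hRT : Rᴴ = R := (nonneg_iff_posSemidef.1 (CFC.sqrt_nonneg A)).isHermitian.eq
  have hdetR : R.det * R.det = A.det := by rw [← det_mul, hRR]
  have hR : IsUnit R :=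
    (isUnit_iff_isUnit_det _).2 (right_ne_zero_of_mul (hdetR ▸ hA.det_pos.ne')).isUnit
  have key :=
    (hB.conjTranspose_mul_mul_same (mulVec_injective_iff_isUnit.2 hR)).log_det_le_trace_sub_card
  rw [hRT, trace_mul_cycle, hRR, det_mul, det_mul,
    show R.det * B.det * R.det = A.det * B.det by rw [← hdetR]; ring,
    Real.log_mul hA.det_pos.ne' hB.det_pos.ne'] at key
  rw [det_nonsing_inv, Ring.inverse_eq_inv', Real.log_inv]
  linarith

end Matrix

theorem rcm_l2_unique_maximizer_general
    (n p : ℕ) (hn : 0 < n)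
    (X : Matrix (Fin n) (Fin p) ℝ) (ρ : ℝ) (hρ : 0 < ρ)
    (V : Matrix (Fin p) (Fin p) ℝ) (hV : V * Vᵀ = 1)
    (lam : Fin p → ℝ)
    (hspec : Xᵀ * X = V * Matrix.diagonal lam * Vᵀ)
    (θ : Fin p → ℝ)
    (hθ : ∀ i, θ i = (lam i + Real.sqrt ((lam i) ^ 2 + 16 * n * ρ)) / (2 * n))
    (Δhat : Matrix (Fin p) (Fin p) ℝ)
    (hΔhat : Δhat = V * Matrix.diagonal θ * Vᵀ)
    (ℓ : Matrix (Fin p) (Fin p) ℝ → ℝ)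
    (hℓ : ∀ Δ : Matrix (Fin p) (Fin p) ℝ,
      ℓ Δ = (n / 2 : ℝ) * Real.log (Δ⁻¹).det
        - (1 / 2 : ℝ) * Matrix.trace (Xᵀ * X * Δ⁻¹)
        - ρ * Matrix.trace (Δ⁻¹ * Δ⁻¹)) :
    Δhat.PosDef ∧ Δhatᵀ = Δhat ∧
      (∀ Δ : Matrix (Fin p) (Fin p) ℝ, Δ.PosDef → Δᵀ = Δ →
        ℓ Δ ≤ ℓ Δhat ∧ (ℓ Δ = ℓ Δhat → Δ = Δhat)) := by
  have hn' : (0 : ℝ) < n := Nat.cast_pos.2 hn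
  have hθ' : ∀ i, θ i = (lam i + √(lam i ^ 2 + 4 * n * (4 * ρ))) / (2 * n) := fun i => by
    rw [hθ i]; ring_nf
  have hθpos : ∀ i, 0 < θ i := fun i => quadratic_root_pos hn' (by positivity) (hθ' i)
  have hlam : lam = (n : ℝ) • θ - (4 * ρ) • θ⁻¹ :=
    funext fun i => quadratic_root_eq hn' (by positivity) (hθ' i)
  have hΔhatPD : Δhat.PosDef := hΔhat ▸ posDef_mul_diagonal_mul_transpose hV hθpos
  have hΔhatU : IsUnit Δhat.det := hΔhatPD.isUnit.map detMonoidHom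
  have hS : Xᵀ * X = (n : ℝ) • Δhat - (4 * ρ) • Δhat⁻¹ := by
    rw [hspec, hlam, hΔhat]
    exact mul_diagonal_sub_inv_mul_transpose hV (fun i => (hθpos i).ne') _ _
  have hℓ' : ∀ Δ, ℓ Δ = (n / 2 : ℝ) * (Real.log Δ⁻¹.det - (Δhat * Δ⁻¹).trace)
      - ρ * ((Δ⁻¹ - Δhat⁻¹) * (Δ⁻¹ - Δhat⁻¹)).trace + ρ * (Δhat⁻¹ * Δhat⁻¹).trace := fun Δ => by
    have := half_trace_mul_add_trace_mul_self hS Δ⁻¹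
    rw [hℓ]; linarith
  have hℓhat : ℓ Δhat = (n / 2 : ℝ) * (Real.log Δhat⁻¹.det - p) + ρ * (Δhat⁻¹ * Δhat⁻¹).trace := by
    rw [hℓ', mul_nonsing_inv _ hΔhatU, sub_self, zero_mul, trace_zero, trace_one, Fintype.card_fin]
    ring
  have hΔhatT : Δhatᵀ = Δhat := by
    simpa [conjTranspose_eq_transpose_of_trivial] using hΔhatPD.isHermitian.eq
  refine ⟨hΔhatPD, hΔhatT, fun Δ hΔ hΔT => ?_⟩
  have hgibbs := mul_le_mul_of_nonneg_left (hΔhatPD.log_det_sub_trace_mul_le hΔ.inv)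
    (by positivity : (0 : ℝ) ≤ n / 2)
  rw [Fintype.card_fin] at hgibbs
  have hsymm : (Δ⁻¹ - Δhat⁻¹)ᵀ = Δ⁻¹ - Δhat⁻¹ := by
    rw [transpose_sub, transpose_nonsing_inv, transpose_nonsing_inv, hΔT, hΔhatT]
  have hfrob := trace_mul_self_nonneg hsymm
  rw [hℓ', hℓhat]
  constructor
  · linarith [mul_nonneg hρ.le hfrob]
  · intro heq
    have h0 : ((Δ⁻¹ - Δhat⁻¹) * (Δ⁻¹ - Δhat⁻¹)).trace = 0 :=
      le_antisymm (le_of_mul_le_mul_left (by linarith) hρ) hfrob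
    exact inv_inj (sub_eq_zero.1 ((trace_mul_self_eq_zero_iff hsymm).1 h0))
      (hΔ.isUnit.map detMonoidHom)

/-- L₂-penalized Gaussian log-likelihood of the regularized covariance
model: `ℓ(Δ) = (n/2)·log det(Δ⁻¹) − (1/2)·tr(XᵀXΔ⁻¹) − ρ·tr(Δ⁻¹Δ⁻¹)`.
If `XᵀX = V diag(λ) Vᵀ` is a spectral decomposition (V orthogonal, λ the squared
singular values of X, nonincreasing and nonnegative), then
`Δ̂ = V diag(θ) Vᵀ` with `θᵢ = (λᵢ + √(λᵢ² + 16 n ρ))/(2n)` is symmetric positive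
definite and is the unique maximizer of `ℓ` over symmetric positive definite matrices. -/
theorem rcm_l2_unique_maximizer
    (n p : ℕ) (hn : 0 < n) (hp : 0 < p)
    (X : Matrix (Fin n) (Fin p) ℝ) (ρ : ℝ) (hρ : 0 < ρ)
    (V : Matrix (Fin p) (Fin p) ℝ) (hV : V * Vᵀ = 1)
    (lam : Fin p → ℝ)
    (hlam_nonneg : ∀ i, 0 ≤ lam i)
    (hlam_mono : ∀ i j : Fin p, i ≤ j → lam j ≤ lam i)
    (hspec : Xᵀ * X = V * Matrix.diagonal lam * Vᵀ)
    (θ : Fin p → ℝ)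
    (hθ : ∀ i, θ i = (lam i + Real.sqrt ((lam i) ^ 2 + 16 * n * ρ)) / (2 * n))
    (Δhat : Matrix (Fin p) (Fin p) ℝ)
    (hΔhat : Δhat = V * Matrix.diagonal θ * Vᵀ)
    (ℓ : Matrix (Fin p) (Fin p) ℝ → ℝ)
    (hℓ : ∀ Δ : Matrix (Fin p) (Fin p) ℝ,
      ℓ Δ = (n / 2 : ℝ) * Real.log (Δ⁻¹).det
        - (1 / 2 : ℝ) * Matrix.trace (Xᵀ * X * Δ⁻¹)
        - ρ * Matrix.trace (Δ⁻¹ * Δ⁻¹)) :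
    Δhat.PosDef ∧ Δhatᵀ = Δhat ∧
      (∀ Δ : Matrix (Fin p) (Fin p) ℝ, Δ.PosDef → Δᵀ = Δ →
        ℓ Δ ≤ ℓ Δhat ∧ (ℓ Δ = ℓ Δhat → Δ = Δhat)) :=
  rcm_l2_unique_maximizer_general n p hn X ρ hρ V hV lam hspec θ hθ Δhat hΔhat ℓ hℓ
end

section
/- Let X ∈ ℝ^{n×p}, ρ_r, ρ_c > 0, and consider the L2:L2-penalized transposable log-likelihood ℓ(Σ,Δ). Starting from a symmetric positive definite Σ⁽⁰⁾ ∈ ℝ^{n×n}, define the block coordinate-wise maximization iterates Δ⁽ᵏ⁺¹⁾ = argmax over symmetric positive definite Δ of ℓ(Σ⁽ᵏ⁾, Δ) and Σ⁽ᵏ⁺¹⁾ = argmax over symmetric positive definite Σ of ℓ(Σ, Δ⁽ᵏ⁺¹⁾) (both argmaxes exist and are unique). Then the sequence ℓ(Σ⁽ᵏ⁾, Δ⁽ᵏ⁾) is nondecreasing in k, and every accumulation point (Σ̄, Δ̄) of the iterates consisting of positive definite matrices is a stationary point of ℓ, i.e., satisfies p·Σ̄ = X·Δ̄⁻¹·Xᵀ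 + 4ρ_r·Σ̄⁻¹ and n·Δ̄ = Xᵀ·Σ̄⁻¹·X + 4ρ_c·Δ̄⁻¹. -/
/-!
A sweep maximizes first over `Δ` and then over `Σ`, so `ℓ(Σ⁽ᵏ⁾, Δ⁽ᵏ⁾)` is nondecreasing.
As `ℓ` is continuous at pairs of positive definite matrices, along a subsequence converging to
`(Σ̄, Δ̄)` the values tend to `ℓ(Σ̄, Δ̄)`, which therefore bounds the whole monotone sequence;
passing to the limit in the maximality of `Δ⁽ᵏ⁺¹⁾` and `Σ⁽ᵏ⁺¹⁾` shows that `Σ̄` maximizes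
`ℓ(·, Δ̄)` and `Δ̄` maximizes `ℓ(Σ̄, ·)`.

In the precision `Q = Σ⁻¹` each partial objective reads `α log det Q - ½ tr(AQ) - c tr(Q²)`
with `A` symmetric. Positive definite matrices are open among symmetric ones, so at a maximizer
the derivative along every symmetric direction `E` vanishes: `tr(GE) = 0` for
`G = αQ⁻¹ - ½A - 2cQ`. Choosing `E = G` gives `tr(G²) = 0`, hence `G = 0`, which is the
stationarity equation.
-/

open Matrix Filter Topology

theorem hasDerivAt_of_eq_add_mul_add_mul_sq {𝕜 : Type*} [NontriviallyNormedField 𝕜]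
    {f g : 𝕜 → 𝕜} {a b : 𝕜} (hg : DifferentiableAt 𝕜 g 0)
    (hf : ∀ t, f t = a + b * t + g t * t ^ 2) : HasDerivAt f b 0 := by
  rw [funext hf]
  exact (((hasDerivAt_id' (0 : 𝕜)).const_mul b).const_add a).add
    (hg.hasDerivAt.mul (hasDerivAt_pow 2 0)) |>.congr_deriv (by simp)

namespace Matrix

variable {ι : Type*} [Fintype ι]

theorem PosDef.eventually_posDef_of_isHermitian {Ψ : Matrix ι ι ℝ} (hΨ : Ψ.PosDef) :
    ∀ᶠ Q in 𝓝 Ψ, Q.IsHermitian → Q.PosDef := by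
  have hquad : Continuous fun z : Matrix ι ι ℝ × (ι → ℝ) => z.2 ⬝ᵥ (z.1 *ᵥ z.2) :=
    continuous_snd.dotProduct (continuous_fst.matrix_mulVec continuous_snd)
  have hsphere : ∀ᶠ Q in 𝓝 Ψ, ∀ u ∈ Metric.sphere (0 : ι → ℝ) 1, 0 < u ⬝ᵥ (Q *ᵥ u) := by
    refine (isCompact_sphere _ _).eventually_forall_of_forall_eventually fun u hu => ?_
    have hu0 : u ≠ 0 := ne_zero_of_mem_unit_sphere ⟨u, hu⟩
    exact continuousAt_const.eventually_lt hquad.continuousAt (by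
      simpa using hΨ.dotProduct_mulVec_pos hu0)
  filter_upwards [hsphere] with Q hQ hherm
  refine .of_dotProduct_mulVec_pos hherm fun x hx => ?_
  have hnorm : 0 < ‖x‖ := norm_pos_iff.mpr hx
  have hu := hQ (‖x‖⁻¹ • x) (by simp [norm_smul, hnorm.ne'])
  rw [smul_dotProduct, mulVec_smul, dotProduct_smul, smul_eq_mul, smul_eq_mul] at hu
  have hinv : 0 ≤ ‖x‖⁻¹ := by positivity
  simpa using pos_of_mul_pos_right (pos_of_mul_pos_right hu hinv) hinv

theorem PosDef.isLocalMax_add_smul {β : Type*} [Preorder β] {f : Matrix ι ι ℝ → β}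
    {Ψ E : Matrix ι ι ℝ} (hΨ : Ψ.PosDef) (hmax : IsMaxOn f {Q | Q.PosDef} Ψ)
    (hE : E.IsHermitian) : IsLocalMax (fun t : ℝ => f (Ψ + t • E)) 0 := by
  have hline : Tendsto (fun t : ℝ => Ψ + t • E) (𝓝 0) (𝓝 Ψ) :=
    (continuous_const.add (continuous_id.smul continuous_const)).tendsto' 0 Ψ (by simp)
  filter_upwards [hline.eventually hΨ.eventually_posDef_of_isHermitian] with t ht
  simpa using hmax (ht (hΨ.1.add (hE.smul (.all t))))

variable [DecidableEq ι]

theorem hasDerivAt_det_add_smul {𝕜 : Type*} [NontriviallyNormedField 𝕜]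
    {Ψ : Matrix ι ι 𝕜} (hΨ : IsUnit Ψ.det) (E : Matrix ι ι 𝕜) :
    HasDerivAt (fun t : 𝕜 => (Ψ + t • E).det) (Ψ.det * (Ψ⁻¹ * E).trace) 0 := by
  set q := (det (1 + (Polynomial.X : Polynomial 𝕜) • (Ψ⁻¹ * E).map Polynomial.C)).divX.divX
  refine hasDerivAt_of_eq_add_mul_add_mul_sq (a := Ψ.det) (g := fun t => Ψ.det * q.eval t)
    ((q.differentiableAt).const_mul _) fun t => ?_
  have hfac : Ψ + t • E = Ψ * (1 + t • (Ψ⁻¹ * E)) := by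
    rw [mul_add, mul_one, Matrix.mul_smul, ← Matrix.mul_assoc, mul_nonsing_inv _ hΨ,
      Matrix.one_mul]
  rw [hfac, det_mul, det_one_add_smul]
  ring

theorem hasDerivAt_log_det_add_smul {Ψ : Matrix ι ι ℝ} (hΨ : 0 < Ψ.det) (E : Matrix ι ι ℝ) :
    HasDerivAt (fun t : ℝ => Real.log (Ψ + t • E).det) (Ψ⁻¹ * E).trace 0 := by
  have h := (hasDerivAt_det_add_smul (isUnit_iff_ne_zero.mpr hΨ.ne') E).log
    (by simpa using hΨ.ne')
  simpa [hΨ.ne'] using h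

theorem continuousAt_inv_of_det_ne_zero {A : Matrix ι ι ℝ} (h : A.det ≠ 0) :
    ContinuousAt Inv.inv A :=
  continuousAt_matrix_inv A (by simpa [Ring.inverse_eq_inv'] using continuousAt_inv₀ h)

theorem isMaxOn_inv_of_isMaxOn_comp_inv {g : Matrix ι ι ℝ → ℝ} {Ψ : Matrix ι ι ℝ}
    (h : IsMaxOn (fun Q => g Q⁻¹) {Q | Q.PosDef} Ψ) : IsMaxOn g {Q | Q.PosDef} Ψ⁻¹ :=
  fun Q hQ => by
    simpa [nonsing_inv_nonsing_inv Q (isUnit_iff_ne_zero.mpr hQ.det_pos.ne')] using h hQ.inv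

end Matrix

section PenalizedLogDet

variable {ι : Type*} [Fintype ι] [DecidableEq ι]

noncomputable def penalizedLogDet (α c : ℝ) (A Q : Matrix ι ι ℝ) : ℝ :=
  α * Real.log Q.det - 1 / 2 * (A * Q).trace - c * (Q * Q).trace

theorem hasDerivAt_penalizedLogDet_add_smul (α c : ℝ) (A : Matrix ι ι ℝ) {Ψ : Matrix ι ι ℝ}
    (hΨ : 0 < Ψ.det) (E : Matrix ι ι ℝ) :
    HasDerivAt (fun t : ℝ => penalizedLogDet α c A (Ψ + t • E))
      ((α • Ψ⁻¹ - (1 / 2 : ℝ) • A - (2 * c) • Ψ) * E).trace 0 := by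
  have hlin : HasDerivAt (fun t : ℝ => (A * (Ψ + t • E)).trace) (A * E).trace 0 :=
    hasDerivAt_of_eq_add_mul_add_mul_sq (a := (A * Ψ).trace) (g := fun _ => 0)
      (differentiableAt_const _) fun t => by
        simp [mul_add, trace_add, mul_comm]
  have hsq : HasDerivAt (fun t : ℝ => ((Ψ + t • E) * (Ψ + t • E)).trace) (2 * (Ψ * E).trace) 0 :=
    hasDerivAt_of_eq_add_mul_add_mul_sq (a := (Ψ * Ψ).trace) (g := fun _ => (E * E).trace)
      (differentiableAt_const _) fun t => by
        simp only [add_mul, mul_add, smul_mul, Matrix.mul_smul, trace_add, trace_smul,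
          smul_eq_mul, trace_mul_comm E Ψ]
        ring
  have h := ((hasDerivAt_log_det_add_smul hΨ E).const_mul α).sub
    (hlin.const_mul (1 / 2)) |>.sub (hsq.const_mul c)
  refine h.congr_deriv ?_
  simp only [sub_mul, smul_mul, trace_sub, trace_smul, smul_eq_mul]
  ring

theorem stationary_of_isMaxOn_penalizedLogDet {α c : ℝ} {A Ψ : Matrix ι ι ℝ}
    (hA : A.IsHermitian) (hΨ : Ψ.PosDef)
    (hmax : IsMaxOn (penalizedLogDet α c A) {Q | Q.PosDef} Ψ) :
    (2 * α) • Ψ⁻¹ = A + (4 * c) • Ψ := by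
  set G := α • Ψ⁻¹ - (1 / 2 : ℝ) • A - (2 * c) • Ψ
  have hG : G.IsHermitian :=
    ((hΨ.inv.1.smul (.all _)).sub (hA.smul (.all _))).sub (hΨ.1.smul (.all _))
  have hGG : (G * G).trace = 0 :=
    (hΨ.isLocalMax_add_smul hmax hG).hasDerivAt_eq_zero
      (hasDerivAt_penalizedLogDet_add_smul α c A hΨ.det_pos G)
  have hG0 : G = 0 := trace_conjTranspose_mul_self_eq_zero_iff.mp (by rwa [hG.eq])
  linear_combination (norm := module) (2 : ℝ) • hG0

end PenalizedLogDet

section BlockCoordinateAscent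

variable {α β : Type*} {f : α → β → ℝ} {U : Set α} {V : Set β} {s : ℕ → α} {d : ℕ → β}

theorem blockAscent_le_succ (hsU : ∀ k, s k ∈ U) (hdV : ∀ k, d k ∈ V)
    (hd : ∀ k, ∀ y ∈ V, f (s k) y ≤ f (s k) (d (k + 1)))
    (hs : ∀ k, ∀ x ∈ U, f x (d (k + 1)) ≤ f (s (k + 1)) (d (k + 1))) (k : ℕ) :
    f (s k) (d k) ≤ f (s (k + 1)) (d (k + 1)) :=
  (hd k _ (hdV k)).trans (hs k _ (hsU k))

theorem blockAscent_isMaxOn_of_tendsto [TopologicalSpace α] [TopologicalSpace β]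
    (hsU : ∀ k, s k ∈ U) (hdV : ∀ k, d k ∈ V)
    (hd : ∀ k, ∀ y ∈ V, f (s k) y ≤ f (s k) (d (k + 1)))
    (hs : ∀ k, ∀ x ∈ U, f x (d (k + 1)) ≤ f (s (k + 1)) (d (k + 1)))
    (hf : ∀ x ∈ U, ∀ y ∈ V, ContinuousAt (Function.uncurry f) (x, y))
    {φ : ℕ → ℕ} (hφ : StrictMono φ) {x₀ : α} {y₀ : β} (hx₀ : x₀ ∈ U) (hy₀ : y₀ ∈ V)
    (hlim : Tendsto (fun k => (s (φ k), d (φ k))) atTop (𝓝 (x₀, y₀))) :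
    IsMaxOn (f x₀) V y₀ ∧ IsMaxOn (f · y₀) U x₀ := by
  have hmono : Monotone fun k => f (s k) (d k) :=
    monotone_nat_of_le_succ (blockAscent_le_succ hsU hdV hd hs)
  have hbound : ∀ k, f (s k) (d k) ≤ f x₀ y₀ := fun k =>
    (hmono (hφ.id_le k)).trans
      ((hmono.comp hφ.monotone).ge_of_tendsto ((hf _ hx₀ _ hy₀).tendsto.comp hlim) k)
  constructor
  · intro y hy
    have hlim_y : Tendsto (fun k => f (s (φ k)) y) atTop (𝓝 (f x₀ y)) :=
      (hf _ hx₀ _ hy).tendsto.comp (((continuous_fst.tendsto _).comp hlim).prodMk_nhds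
        tendsto_const_nhds)
    exact le_of_tendsto' hlim_y fun k => (hd _ y hy).trans ((hs _ _ (hsU _)).trans (hbound _))
  · intro x hx
    have hlim_x : Tendsto (fun k => f x (d (φ k))) atTop (𝓝 (f x y₀)) :=
      (hf _ hx _ hy₀).tendsto.comp (tendsto_const_nhds.prodMk_nhds
        ((continuous_snd.tendsto _).comp hlim))
    refine le_of_tendsto hlim_x (eventually_atTop.2 ⟨1, fun k hk => ?_⟩)
    obtain ⟨m, hm⟩ := Nat.exists_eq_add_of_le' (hk.trans (hφ.id_le k))
    simpa only [hm] using (hs m x hx).trans (hbound _)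

end BlockCoordinateAscent

section TransposableLogLik

variable {ι κ : Type*} [Fintype ι] [Fintype κ] [DecidableEq ι] [DecidableEq κ]

noncomputable def transposableLogLik (X : Matrix ι κ ℝ) (ρr ρc : ℝ) (S : Matrix ι ι ℝ)
    (D : Matrix κ κ ℝ) : ℝ :=
  (Fintype.card κ / 2 : ℝ) * Real.log S⁻¹.det + (Fintype.card ι / 2 : ℝ) * Real.log D⁻¹.det
    - 1 / 2 * (S⁻¹ * X * D⁻¹ * Xᵀ).trace - ρr * (S⁻¹ * S⁻¹).trace - ρc * (D⁻¹ * D⁻¹).trace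

theorem continuousAt_transposableLogLik (X : Matrix ι κ ℝ) (ρr ρc : ℝ) {S : Matrix ι ι ℝ}
    {D : Matrix κ κ ℝ} (hS : S.det ≠ 0) (hD : D.det ≠ 0) :
    ContinuousAt (Function.uncurry (transposableLogLik X ρr ρc)) (S, D) := by
  have hSinv : ContinuousAt (fun z : Matrix ι ι ℝ × Matrix κ κ ℝ => z.1⁻¹) (S, D) :=
    (continuousAt_inv_of_det_ne_zero hS).comp continuousAt_fst
  have hDinv : ContinuousAt (fun z : Matrix ι ι ℝ × Matrix κ κ ℝ => z.2⁻¹) (S, D) :=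
    (continuousAt_inv_of_det_ne_zero hD).comp continuousAt_snd
  have hS' : (S⁻¹).det ≠ 0 := by simpa [det_nonsing_inv] using hS
  have hD' : (D⁻¹).det ≠ 0 := by simpa [det_nonsing_inv] using hD
  unfold transposableLogLik Function.uncurry
  fun_prop (disch := assumption)

theorem transposableLogLik_eq_left (X : Matrix ι κ ℝ) (ρr ρc : ℝ) (S : Matrix ι ι ℝ)
    (D : Matrix κ κ ℝ) :
    transposableLogLik X ρr ρc S D = penalizedLogDet (Fintype.card κ / 2) ρr (X * D⁻¹ * Xᵀ) S⁻¹
      + ((Fintype.card ι / 2 : ℝ) * Real.log D⁻¹.det - ρc * (D⁻¹ * D⁻¹).trace) := by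
  rw [transposableLogLik, penalizedLogDet, trace_mul_comm (X * D⁻¹ * Xᵀ)]
  simp only [Matrix.mul_assoc]
  ring

theorem transposableLogLik_eq_right (X : Matrix ι κ ℝ) (ρr ρc : ℝ) (S : Matrix ι ι ℝ)
    (D : Matrix κ κ ℝ) :
    transposableLogLik X ρr ρc S D = penalizedLogDet (Fintype.card ι / 2) ρc (Xᵀ * S⁻¹ * X) D⁻¹
      + ((Fintype.card κ / 2 : ℝ) * Real.log S⁻¹.det - ρr * (S⁻¹ * S⁻¹).trace) := by
  rw [transposableLogLik, penalizedLogDet, trace_mul_comm (S⁻¹ * X * D⁻¹) Xᵀ]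
  simp only [Matrix.mul_assoc]
  ring

theorem transposableLogLik_stationary_left {X : Matrix ι κ ℝ} {ρr ρc : ℝ} {S : Matrix ι ι ℝ}
    {D : Matrix κ κ ℝ} (hS : S.PosDef) (hD : D.IsHermitian)
    (hmax : IsMaxOn (transposableLogLik X ρr ρc · D) {Q | Q.PosDef} S) :
    (Fintype.card κ : ℝ) • S = X * D⁻¹ * Xᵀ + (4 * ρr) • S⁻¹ := by
  have hA : (X * D⁻¹ * Xᵀ).IsHermitian := by
    simpa [conjTranspose_eq_transpose_of_trivial] using
      isHermitian_mul_mul_conjTranspose X hD.inv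
  have h := stationary_of_isMaxOn_penalizedLogDet hA hS.inv <|
    isMaxOn_inv_of_isMaxOn_comp_inv fun Q hQ => by
      simpa [transposableLogLik_eq_left] using hmax hQ
  rwa [nonsing_inv_nonsing_inv S (isUnit_iff_ne_zero.mpr hS.det_pos.ne'),
    show 2 * ((Fintype.card κ : ℝ) / 2) = Fintype.card κ by ring] at h

theorem transposableLogLik_stationary_right {X : Matrix ι κ ℝ} {ρr ρc : ℝ} {S : Matrix ι ι ℝ}
    {D : Matrix κ κ ℝ} (hS : S.IsHermitian) (hD : D.PosDef)
    (hmax : IsMaxOn (transposableLogLik X ρr ρc S) {Q | Q.PosDef} D) :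
    (Fintype.card ι : ℝ) • D = Xᵀ * S⁻¹ * X + (4 * ρc) • D⁻¹ := by
  have hA : (Xᵀ * S⁻¹ * X).IsHermitian := by
    simpa [conjTranspose_eq_transpose_of_trivial] using
      isHermitian_conjTranspose_mul_mul X hS.inv
  have h := stationary_of_isMaxOn_penalizedLogDet hA hD.inv <|
    isMaxOn_inv_of_isMaxOn_comp_inv fun Q hQ => by
      simpa [transposableLogLik_eq_right] using hmax hQ
  rwa [nonsing_inv_nonsing_inv D (isUnit_iff_ne_zero.mpr hD.det_pos.ne'),
    show 2 * ((Fintype.card ι : ℝ) / 2) = Fintype.card ι by ring] at h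

end TransposableLogLik

theorem trcm_block_coordinate_ascent_stationary_general
    (n p : ℕ) (X : Matrix (Fin n) (Fin p) ℝ)
    (ρr ρc : ℝ)
    (ℓ : Matrix (Fin n) (Fin n) ℝ → Matrix (Fin p) (Fin p) ℝ → ℝ)
    (hℓ : ∀ (S : Matrix (Fin n) (Fin n) ℝ) (D : Matrix (Fin p) (Fin p) ℝ),
      ℓ S D = (p / 2 : ℝ) * Real.log (S⁻¹).det + (n / 2 : ℝ) * Real.log (D⁻¹).det
        - (1 / 2 : ℝ) * Matrix.trace (S⁻¹ * X * D⁻¹ * Xᵀ)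
        - ρr * Matrix.trace (S⁻¹ * S⁻¹) - ρc * Matrix.trace (D⁻¹ * D⁻¹))
    (S : ℕ → Matrix (Fin n) (Fin n) ℝ) (D : ℕ → Matrix (Fin p) (Fin p) ℝ)
    (hSpd : ∀ k, (S k).PosDef) (hDpd : ∀ k, (D k).PosDef)
    (hDmax : ∀ k, ∀ Δ : Matrix (Fin p) (Fin p) ℝ, Δ.PosDef →
      ℓ (S k) Δ ≤ ℓ (S k) (D (k + 1)))
    (hSmax : ∀ k, ∀ Sg : Matrix (Fin n) (Fin n) ℝ, Sg.PosDef →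
      ℓ Sg (D (k + 1)) ≤ ℓ (S (k + 1)) (D (k + 1))) :
    (∀ k, ℓ (S k) (D k) ≤ ℓ (S (k + 1)) (D (k + 1))) ∧
    (∀ (Sbar : Matrix (Fin n) (Fin n) ℝ) (Dbar : Matrix (Fin p) (Fin p) ℝ),
      Sbar.PosDef → Dbar.PosDef →
      (∃ φ : ℕ → ℕ, StrictMono φ ∧
        Tendsto (fun k => (S (φ k), D (φ k))) atTop (𝓝 (Sbar, Dbar))) →
      (p : ℝ) • Sbar = X * Dbar⁻¹ * Xᵀ + (4 * ρr) • Sbar⁻¹ ∧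
      (n : ℝ) • Dbar = Xᵀ * Sbar⁻¹ * X + (4 * ρc) • Dbar⁻¹) := by
  obtain rfl : ℓ = transposableLogLik X ρr ρc := by
    funext Sg Dg
    simp [hℓ, transposableLogLik]
  refine ⟨blockAscent_le_succ hSpd hDpd hDmax hSmax, ?_⟩
  rintro Sbar Dbar hSb hDb ⟨φ, hφ, hlim⟩
  obtain ⟨hmaxD, hmaxS⟩ := blockAscent_isMaxOn_of_tendsto (U := {Q | Q.PosDef})
    (V := {Q | Q.PosDef}) hSpd hDpd hDmax hSmax
    (fun _ hS _ hD => continuousAt_transposableLogLik X ρr ρc hS.det_pos.ne' hD.det_pos.ne')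
    hφ hSb hDb hlim
  have hleft := transposableLogLik_stationary_left hSb hDb.1 hmaxS
  have hright := transposableLogLik_stationary_right hSb.1 hDb hmaxD
  simp only [Fintype.card_fin] at hleft hright
  exact ⟨hleft, hright⟩

/-- Block coordinate-wise maximization of the L₂:L₂-penalized
transposable log-likelihood `ℓ(Σ,Δ)`: starting from a positive definite `Σ⁽⁰⁾`, if
`Δ⁽ᵏ⁺¹⁾` maximizes `ℓ(Σ⁽ᵏ⁾, ·)` and `Σ⁽ᵏ⁺¹⁾` maximizes `ℓ(·, Δ⁽ᵏ⁺¹⁾)` over positive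
definite matrices, then `ℓ(Σ⁽ᵏ⁾,Δ⁽ᵏ⁾)` is nondecreasing in `k`, and every positive
definite accumulation point `(Σ̄,Δ̄)` of the iterates is a stationary point of `ℓ`:
`p·Σ̄ = XΔ̄⁻¹Xᵀ + 4ρ_r·Σ̄⁻¹` and `n·Δ̄ = XᵀΣ̄⁻¹X + 4ρ_c·Δ̄⁻¹`. -/
theorem trcm_block_coordinate_ascent_stationary
    (n p : ℕ) (X : Matrix (Fin n) (Fin p) ℝ)
    (ρr ρc : ℝ) (hρr : 0 < ρr) (hρc : 0 < ρc)
    (ℓ : Matrix (Fin n) (Fin n) ℝ → Matrix (Fin p) (Fin p) ℝ → ℝ)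
    (hℓ : ∀ (S : Matrix (Fin n) (Fin n) ℝ) (D : Matrix (Fin p) (Fin p) ℝ),
      ℓ S D = (p / 2 : ℝ) * Real.log (S⁻¹).det + (n / 2 : ℝ) * Real.log (D⁻¹).det
        - (1 / 2 : ℝ) * Matrix.trace (S⁻¹ * X * D⁻¹ * Xᵀ)
        - ρr * Matrix.trace (S⁻¹ * S⁻¹) - ρc * Matrix.trace (D⁻¹ * D⁻¹))
    (S : ℕ → Matrix (Fin n) (Fin n) ℝ) (D : ℕ → Matrix (Fin p) (Fin p) ℝ)
    (hSpd : ∀ k, (S k).PosDef) (hDpd : ∀ k, (D k).PosDef)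
    (hDmax : ∀ k, ∀ Δ : Matrix (Fin p) (Fin p) ℝ, Δ.PosDef →
      ℓ (S k) Δ ≤ ℓ (S k) (D (k + 1)))
    (hSmax : ∀ k, ∀ Sg : Matrix (Fin n) (Fin n) ℝ, Sg.PosDef →
      ℓ Sg (D (k + 1)) ≤ ℓ (S (k + 1)) (D (k + 1))) :
    (∀ k, ℓ (S k) (D k) ≤ ℓ (S (k + 1)) (D (k + 1))) ∧
    (∀ (Sbar : Matrix (Fin n) (Fin n) ℝ) (Dbar : Matrix (Fin p) (Fin p) ℝ),
      Sbar.PosDef → Dbar.PosDef →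
      (∃ φ : ℕ → ℕ, StrictMono φ ∧
        Tendsto (fun k => (S (φ k), D (φ k))) atTop (𝓝 (Sbar, Dbar))) →
      (p : ℝ) • Sbar = X * Dbar⁻¹ * Xᵀ + (4 * ρr) • Sbar⁻¹ ∧
      (n : ℝ) • Dbar = Xᵀ * Sbar⁻¹ * X + (4 * ρc) • Dbar⁻¹) :=
  trcm_block_coordinate_ascent_stationary_general n p X ρr ρc ℓ hℓ S D hSpd hDpd hDmax hSmax
end

section
/- Let n, p ≥ 1, ρ_r, ρ_c > 0 and d > 0. Set c₁ = −4ρ_c·p², c₂ = 32ρ_rρ_c·p + d⁴·(n−p), c₃ = 4ρ_r·(d⁴ − 16ρ_rρ_c), and define β = √((−c₂ − √(c₂² − 4c₁c₃))/(2c₁)) and θ = d²·β/(p·β² − 4ρ_r). Then the discriminant satisfies c₂² − 4c₁c₃ ≥ 0 and −c₂ − √(c₂² − 4c₁c₃) has the same sign as c₁ (so β is a well-defined positive real), p·β² − 4ρ_r > 0 so θ > 0, and the pair (β, θ) satisfies the two stationarity equations of the L2:L2 transposable model: p·θ·β² − d²·β − 4ρ_r·θ = 0 and n·β·θ² − d²·θ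 − 4ρ_c·β = 0. -/
/-!
Writing `x = β²`, the first stationarity equation gives `θ = d²β / (pβ² − 4ρ_r)`, and
substituting this into the second one (after clearing the denominator) leaves
`β · (c₁x² + c₂x + c₃) = 0`. So `β²` must be a root of this quadratic, and the formula for `β`
picks the root `(−c₂ − √D)/(2c₁)`. Its discriminant is `D = 64ρ_rρ_c·pn·d⁴ + (d⁴(n − p))²`,
so `√D > |d⁴(n − p)|`; this one inequality gives both that the root is positive and that
`pβ² − 4ρ_r = (d⁴(n − p) + √D)/(8ρ_c p)` is positive.
-/

theorem abs_lt_sqrt_add_sq {a : ℝ} (ha : 0 < a) (b : ℝ) : |b| < √(a + b ^ 2) := by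
  rw [Real.lt_sqrt (abs_nonneg b), sq_abs]
  linarith

namespace TransposableL2L2

theorem discrim_eq (n p ρr ρc d : ℝ) :
    discrim (-4 * ρc * p ^ 2) (32 * ρr * ρc * p + d ^ 4 * (n - p))
        (4 * ρr * (d ^ 4 - 16 * ρr * ρc)) =
      64 * ρr * ρc * p * n * d ^ 4 + (d ^ 4 * (n - p)) ^ 2 := by
  unfold discrim
  ring

variable {n p ρr ρc d u s : ℝ}

theorem neg_sub_lt_zero_of_abs_lt (hρr : 0 < ρr) (hρc : 0 < ρc) (hp : 0 < p) (hs : |u| < s) :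
    -(32 * ρr * ρc * p + u) - s < 0 := by
  have : 0 < 32 * ρr * ρc * p := by positivity
  linarith [neg_abs_le u]

theorem sub_pos_of_eq_root (hρc : 0 < ρc) (hp : 0 < p) (hs : |u| < s) {x : ℝ}
    (hx : x = (-(32 * ρr * ρc * p + u) - s) / (2 * (-4 * ρc * p ^ 2))) :
    0 < p * x - 4 * ρr := by
  have hscaled : 8 * ρc * p * (p * x - 4 * ρr) = u + s := by
    rw [hx]
    field_simp
    ring
  have : 0 < 8 * ρc * p * (p * x - 4 * ρr) := by
    rw [hscaled]
    linarith [neg_abs_le u]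
  exact pos_of_mul_pos_right this (by positivity)

theorem col_stationarity_of_quartic {β θ : ℝ} (hS : p * β ^ 2 - 4 * ρr ≠ 0)
    (hθ : θ * (p * β ^ 2 - 4 * ρr) = d ^ 2 * β)
    (hq : -4 * ρc * p ^ 2 * (β ^ 2 * β ^ 2) + (32 * ρr * ρc * p + d ^ 4 * (n - p)) * β ^ 2 +
      4 * ρr * (d ^ 4 - 16 * ρr * ρc) = 0) :
    n * β * θ ^ 2 - d ^ 2 * θ - 4 * ρc * β = 0 := by
  have hscaled : (p * β ^ 2 - 4 * ρr) ^ 2 * (n * β * θ ^ 2 - d ^ 2 * θ - 4 * ρc * β) = 0 := by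
    linear_combination (n * β * (θ * (p * β ^ 2 - 4 * ρr) + d ^ 2 * β) -
      d ^ 2 * (p * β ^ 2 - 4 * ρr)) * hθ + β * hq
  exact (mul_eq_zero.mp hscaled).resolve_left (pow_ne_zero 2 hS)

end TransposableL2L2

open TransposableL2L2 in
/-- For `n, p ≥ 1`, `ρ_r, ρ_c > 0`, `d > 0`, with
`c₁ = −4ρ_c p²`, `c₂ = 32ρ_rρ_c p + d⁴(n−p)`, `c₃ = 4ρ_r(d⁴ − 16ρ_rρ_c)`,
`β = √((−c₂ − √(c₂² − 4c₁c₃))/(2c₁))` and `θ = d²β/(pβ² − 4ρ_r)`: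
the discriminant is nonnegative, `−c₂ − √(c₂² − 4c₁c₃)` has the same sign as `c₁`
(so `β` is a well-defined positive real), `pβ² − 4ρ_r > 0` so `θ > 0`, and `(β, θ)`
solves the coupled stationarity equations `pθβ² − d²β − 4ρ_rθ = 0` and
`nβθ² − d²θ − 4ρ_cβ = 0`. -/
theorem trcm_l2l2_eigenvalue_system
    (n p : ℕ) (hn : 1 ≤ n) (hp : 1 ≤ p)
    (ρr ρc d : ℝ) (hρr : 0 < ρr) (hρc : 0 < ρc) (hd : 0 < d)
    (c₁ c₂ c₃ β θ : ℝ)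
    (hc₁ : c₁ = -4 * ρc * (p : ℝ) ^ 2)
    (hc₂ : c₂ = 32 * ρr * ρc * p + d ^ 4 * ((n : ℝ) - p))
    (hc₃ : c₃ = 4 * ρr * (d ^ 4 - 16 * ρr * ρc))
    (hβ : β = Real.sqrt ((-c₂ - Real.sqrt (c₂ ^ 2 - 4 * c₁ * c₃)) / (2 * c₁)))
    (hθ : θ = d ^ 2 * β / (p * β ^ 2 - 4 * ρr)) :
    0 ≤ c₂ ^ 2 - 4 * c₁ * c₃ ∧
    (-c₂ - Real.sqrt (c₂ ^ 2 - 4 * c₁ * c₃)) * c₁ > 0 ∧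
    0 < β ∧
    0 < p * β ^ 2 - 4 * ρr ∧
    0 < θ ∧
    p * θ * β ^ 2 - d ^ 2 * β - 4 * ρr * θ = 0 ∧
    n * β * θ ^ 2 - d ^ 2 * θ - 4 * ρc * β = 0 := by
  have hp0 : (0 : ℝ) < p := by exact_mod_cast hp
  have hn0 : (0 : ℝ) < n := by exact_mod_cast hn
  have hD : c₂ ^ 2 - 4 * c₁ * c₃ = 64 * ρr * ρc * p * n * d ^ 4 + (d ^ 4 * ((n : ℝ) - p)) ^ 2 := by
    rw [hc₁, hc₂, hc₃]
    exact discrim_eq _ _ _ _ _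
  have hD0 : 0 < c₂ ^ 2 - 4 * c₁ * c₃ := by rw [hD]; positivity
  have hs : |d ^ 4 * ((n : ℝ) - p)| < √(c₂ ^ 2 - 4 * c₁ * c₃) := by
    rw [hD]
    exact abs_lt_sqrt_add_sq (by positivity) _
  set s := √(c₂ ^ 2 - 4 * c₁ * c₃)
  have hnum : -c₂ - s < 0 := by
    rw [hc₂]
    exact neg_sub_lt_zero_of_abs_lt hρr hρc hp0 hs
  have hc₁neg : c₁ < 0 := by
    rw [hc₁]
    nlinarith [mul_pos hρc (pow_pos hp0 2)]
  have hx : 0 < (-c₂ - s) / (2 * c₁) :=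
    div_pos_of_neg_of_neg hnum (by linarith)
  have hβ2 : β ^ 2 = (-c₂ - s) / (2 * c₁) := hβ ▸ Real.sq_sqrt hx.le
  have hS : 0 < p * β ^ 2 - 4 * ρr := by
    rw [hc₁, hc₂] at hβ2
    exact sub_pos_of_eq_root hρc hp0 hs hβ2
  have hθS : θ * (p * β ^ 2 - 4 * ρr) = d ^ 2 * β := hθ ▸ div_mul_cancel₀ _ hS.ne'
  have hquad : c₁ * (β ^ 2 * β ^ 2) + c₂ * β ^ 2 + c₃ = 0 :=
    (quadratic_eq_zero_iff hc₁neg.ne (Real.mul_self_sqrt hD0.le).symm _).2 (Or.inr hβ2)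
  have hβ0 : 0 < β := hβ ▸ Real.sqrt_pos.2 hx
  refine ⟨hD0.le, mul_pos_of_neg_of_neg hnum hc₁neg, hβ0, hS, hθ ▸ by positivity,
    by linear_combination hθS, ?_⟩
  rw [hc₁, hc₂, hc₃] at hquad
  exact col_stationarity_of_quartic hS.ne' hθS hquad
end

section
/- Let Σ ∈ ℝ^{n×n} and Δ ∈ ℝ^{p×p} be symmetric positive definite, ν ∈ ℝⁿ, μ ∈ ℝ^p, M = ν·1_pᵀ + 1_n·μᵀ, and Ω = Δ⊗Σ the np×np matrix with Ω[(i,j),(i',j')] = Σ_{i,i'}·Δ_{j,j'}. Fix a row index i, let k denote the remaining n−1 row indices, and let {1,…,p} = m_i ⊔ o_i be any partition of the columns. Let x ∈ ℝ^{n×p}, define ψ = M_{i,·} + Σ_{i,k}·Σ_{k,k}⁻¹·(x_{k,·} − M_{k,·}) ∈ ℝ^p, γ = Σ_{i,i} − Σ_{i,k}·Σ_{k,k}⁻¹·Σ_{k,i} (a positive scalar), and Γ = γ·Δ. Let S = {i}×m_i and O = ({1,…,n}×{1,…,p}) \ S. Then Ω_{O,O} is positive definite and the one-step (direct) Gaussian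 conditioning formulas agree with the two-step formulas: (a) vec(M)_S + Ω_{S,O}·Ω_{O,O}⁻¹·(vec(x)_O − vec(M)_O) = ψ_{m_i} + Γ_{m_i,o_i}·Γ_{o_i,o_i}⁻¹·(x_{i,o_i} − ψ_{o_i}), and (b) Ω_{S,S} − Ω_{S,O}·Ω_{O,O}⁻¹·Ω_{O,S} = Γ_{m_i,m_i} − Γ_{m_i,o_i}·Γ_{o_i,o_i}⁻¹·Γ_{o_i,m_i}. (This is the row version of the two-step conditional distribution for the mean-restricted matrix-variate normal: X_{i,m_i} given the rest of the matrix is Gaussian with the displayed mean and covariance.) -/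
/-!
Let `Λ := R_Σ ⊗ (1 - R_Δ) + 1 ⊗ R_Δ`, where `R_Σ` regresses on the other rows and `R_Δ` on the
observed columns `o_i`. Then `Λ` is supported on `O = (k × all columns) ∪ ({i} × o_i)` and reproduces
the columns `O` of `Σ ⊗ Δ`, and these two properties characterise the regression coefficient
`Ω_{·,O} Ω_{O,O}⁻¹`. Applied to a vectorised residual, `Λ` performs the two one-step regressions in
turn, and the residual covariance `Σ ⊗ Δ - Λ (Σ ⊗ Δ)` is the Kronecker product
`(Σ - R_Σ Σ) ⊗ (Δ - R_Δ Δ)`, whose `((i, j), (i, l))` entry is `γ (Δ - R_Δ Δ)_{j,l}`.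
-/

open Matrix Kronecker

namespace Matrix

variable {ι κ ρ R : Type*} [Fintype ι] [DecidableEq ι] [CommRing R]

section Support

variable {P : ι → Prop} [DecidablePred P] {L : Matrix κ ι R}

omit [DecidableEq ι] in
lemma mul_eq_submatrix_mul_submatrix (hL : ∀ r b, ¬P b → L r b = 0) (B : Matrix ι ρ R) :
    L * B = (L.submatrix id Subtype.val : Matrix κ {b // P b} R) * B.submatrix Subtype.val id := by
  ext r c
  rw [mul_apply, ← Fintype.sum_subtype_add_sum_subtype P]
  simp [fun b : {b // ¬P b} => hL r b b.2]
  rfl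

omit [DecidableEq ι] in
lemma mulVec_eq_submatrix_mulVec (hL : ∀ r b, ¬P b → L r b = 0) (v : ι → R) :
    L *ᵥ v = (L.submatrix id Subtype.val : Matrix κ {b // P b} R) *ᵥ fun b => v b := by
  ext r
  rw [mulVec, dotProduct, ← Fintype.sum_subtype_add_sum_subtype P]
  simp [fun b : {b // ¬P b} => hL r b b.2]
  rfl

end Support

/-- The coefficients `A_{·,P} A_{P,P}⁻¹` of the best linear predictor of every coordinate from the
coordinates in `P` (for a covariance matrix `A`), padded by zero columns outside `P`. -/
noncomputable def regressionCoeff (A : Matrix ι ι R) (P : ι → Prop) [DecidablePred P] :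
    Matrix ι ι R :=
  of fun r c => if h : P c then
    ((A.submatrix id Subtype.val : Matrix ι {a // P a} R) *
      (A.submatrix Subtype.val Subtype.val : Matrix {a // P a} {a // P a} R)⁻¹) r ⟨c, h⟩
    else 0

section regressionCoeff

variable {A : Matrix ι ι R} {P : ι → Prop} [DecidablePred P]

lemma regressionCoeff_apply_of_not {c : ι} (hc : ¬P c) (r : ι) :
    regressionCoeff A P r c = 0 := by
  simp [regressionCoeff, hc]

lemma regressionCoeff_submatrix (f : κ → ι) :
    (regressionCoeff A P).submatrix f Subtype.val =
      (A.submatrix f Subtype.val : Matrix κ {a // P a} R) *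
        (A.submatrix Subtype.val Subtype.val : Matrix {a // P a} {a // P a} R)⁻¹ := by
  ext r c
  simp [regressionCoeff, c.2]
  rfl

lemma regressionCoeff_mul_eq_submatrix_mul (B : Matrix ι ρ R) :
    regressionCoeff A P * B =
      ((regressionCoeff A P).submatrix id Subtype.val : Matrix ι {a // P a} R) *
        (B.submatrix Subtype.val id : Matrix {a // P a} ρ R) :=
  mul_eq_submatrix_mul_submatrix (fun _ _ hc => regressionCoeff_apply_of_not hc _) B

lemma regressionCoeff_mul_apply (B : Matrix ι ρ R) (r : ι) (c : ρ) :
    (regressionCoeff A P * B) r c = (fun a : {a // P a} => A r a) ⬝ᵥ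
      ((A.submatrix Subtype.val Subtype.val)⁻¹ *ᵥ fun a : {a // P a} => B a c) := by
  rw [regressionCoeff_mul_eq_submatrix_mul, regressionCoeff_submatrix, Matrix.mul_assoc]
  rfl

lemma regressionCoeff_mul_self_of_mem
    (hA : IsUnit (A.submatrix Subtype.val Subtype.val : Matrix {a // P a} {a // P a} R).det)
    (r : ι) {c : ι} (hc : P c) :
    (regressionCoeff A P * A) r c = A r c := by
  rw [regressionCoeff_mul_eq_submatrix_mul, regressionCoeff_submatrix]
  exact congrFun (congrFun (nonsing_inv_mul_cancel_right _ (A.submatrix id Subtype.val) hA) r)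
    ⟨c, hc⟩

lemma regressionCoeff_eq_of_mul_self
    (hA : IsUnit (A.submatrix Subtype.val Subtype.val : Matrix {a // P a} {a // P a} R).det)
    {L : Matrix ι ι R} (hL₀ : ∀ r c, ¬P c → L r c = 0) (hL : ∀ r c, P c → (L * A) r c = A r c) :
    regressionCoeff A P = L := by
  have hLA : (L.submatrix id Subtype.val : Matrix ι {c // P c} R) *
      (A.submatrix Subtype.val Subtype.val : Matrix {c // P c} {c // P c} R) =
        A.submatrix id Subtype.val := by
    ext r c
    exact (congrFun (congrFun (mul_eq_submatrix_mul_submatrix hL₀ A) r) c).symm.trans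
      (hL r c c.2)
  ext r c
  by_cases hc : P c
  · have := congrFun (congrFun (regressionCoeff_submatrix (A := A) (P := P) id) r) ⟨c, hc⟩
    rwa [← hLA, mul_nonsing_inv_cancel_right _ _ hA] at this
  · rw [regressionCoeff_apply_of_not hc, hL₀ r c hc]

lemma regressionCoeff_smul {k : R} (hk : IsUnit k)
    (hA : IsUnit (A.submatrix Subtype.val Subtype.val : Matrix {a // P a} {a // P a} R).det) :
    regressionCoeff (k • A) P = regressionCoeff A P := by
  refine regressionCoeff_eq_of_mul_self ?_ (fun _ _ hc => regressionCoeff_apply_of_not hc _)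
    fun r c hc => ?_
  · rw [show (k • A).submatrix Subtype.val Subtype.val = k • A.submatrix Subtype.val Subtype.val
      from rfl, det_smul]
    exact (hk.pow _).mul hA
  · rw [Matrix.mul_smul, smul_apply, smul_apply, regressionCoeff_mul_self_of_mem hA r hc]

lemma submatrix_sub_mul_inv_mul (f : κ → ι) :
    A.submatrix f f - (A.submatrix f Subtype.val : Matrix κ {a // P a} R) *
      (A.submatrix Subtype.val Subtype.val : Matrix {a // P a} {a // P a} R)⁻¹ *
        (A.submatrix Subtype.val f : Matrix {a // P a} κ R) =
      (A - regressionCoeff A P * A).submatrix f f := by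
  rw [← regressionCoeff_submatrix, submatrix_sub, regressionCoeff_mul_eq_submatrix_mul]
  rfl

lemma submatrix_mulVec_inv_mulVec (f : κ → ι) (v : ι → R) :
    (A.submatrix f Subtype.val : Matrix κ {a // P a} R) *ᵥ
      ((A.submatrix Subtype.val Subtype.val : Matrix {a // P a} {a // P a} R)⁻¹ *ᵥ
        fun c => v c) = fun r => (regressionCoeff A P *ᵥ v) (f r) := by
  rw [mulVec_mulVec, ← regressionCoeff_submatrix,
    mulVec_eq_submatrix_mulVec (fun _ _ hc => regressionCoeff_apply_of_not hc _)]
  rfl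

end regressionCoeff

lemma PosDef.isUnit_det_submatrix {A : Matrix ι ι ℝ} (hA : A.PosDef) (P : ι → Prop)
    [DecidablePred P] :
    IsUnit (A.submatrix Subtype.val Subtype.val : Matrix {a // P a} {a // P a} ℝ).det :=
  (isUnit_iff_isUnit_det _).1 (hA.submatrix Subtype.val_injective).isUnit

lemma PosDef.sub_regressionCoeff_mul_self_pos {A : Matrix ι ι ℝ} (hA : A.PosDef)
    {P : ι → Prop} [DecidablePred P] {i : ι} (hi : ¬P i) :
    0 < A i i - (regressionCoeff A P * A) i i := by
  set y := Pi.single i 1 - regressionCoeff A P i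
  have hyi : y i = 1 := by simp [y, regressionCoeff_apply_of_not hi]
  have hyA : y ᵥ* A = A i - (regressionCoeff A P * A) i := by
    rw [sub_vecMul, single_vecMul, one_smul]
    rfl
  -- `y ᵥ* A` vanishes on `P` and `y` vanishes off `P ∪ {i}`, so only the `i`-th term survives.
  have hquad : star y ⬝ᵥ (A *ᵥ y) = A i i - (regressionCoeff A P * A) i i := by
    rw [star_trivial, dotProduct_mulVec, hyA, dotProduct, Finset.sum_eq_single i]
    · simp [hyi]
    · intro c _ hc
      by_cases hPc : P c
      · simp [regressionCoeff_mul_self_of_mem (hA.isUnit_det_submatrix P) i hPc]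
      · simp [y, hc, regressionCoeff_apply_of_not hPc]
    · simp
  exact hquad ▸ hA.dotProduct_mulVec_pos fun h => by simp [h] at hyi

section Kronecker

variable [Fintype κ] [DecidableEq κ]

/-- Regress on the rows with coefficients `X`, then regress the residual on the columns with
coefficients `Y`. -/
def twoStepRegressionCoeff (X : Matrix ι ι R) (Y : Matrix κ κ R) : Matrix (ι × κ) (ι × κ) R :=
  X ⊗ₖ (1 - Y) + 1 ⊗ₖ Y

lemma twoStepRegressionCoeff_mul_kronecker (X A : Matrix ι ι R) (Y B : Matrix κ κ R) :
    twoStepRegressionCoeff X Y * (A ⊗ₖ B) = (X * A) ⊗ₖ (B - Y * B) + A ⊗ₖ (Y * B) := by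
  rw [twoStepRegressionCoeff, add_mul, ← mul_kronecker_mul, ← mul_kronecker_mul, one_mul,
    sub_mul, one_mul]

lemma kronecker_sub_twoStepRegressionCoeff_mul (X A : Matrix ι ι R) (Y B : Matrix κ κ R) :
    A ⊗ₖ B - twoStepRegressionCoeff X Y * (A ⊗ₖ B) = (A - X * A) ⊗ₖ (B - Y * B) := by
  rw [twoStepRegressionCoeff_mul_kronecker]
  ext ⟨r, j⟩ ⟨r', l⟩
  simp only [sub_apply, add_apply, kroneckerMap_apply]
  ring

lemma twoStepRegressionCoeff_mulVec_apply (X : Matrix ι ι R) (Y : Matrix κ κ R)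
    (E : Matrix ι κ R) (r : ι) (j : κ) :
    (twoStepRegressionCoeff X Y *ᵥ fun q => E q.1 q.2) (r, j) =
      (X * E) r j + (Y *ᵥ fun j' => (E - X * E) r j') j := by
  have h : (1 - Y) * Eᵀ * Xᵀ + Y * Eᵀ = (X * E)ᵀ + Y * (E - X * E)ᵀ := by
    rw [transpose_sub, transpose_mul, Matrix.sub_mul, Matrix.sub_mul, Matrix.mul_sub,
      Matrix.one_mul, Matrix.mul_assoc]
    abel
  rw [show (fun q : ι × κ => E q.1 q.2) = vec Eᵀ from rfl, twoStepRegressionCoeff, add_mulVec,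
    kronecker_mulVec_vec, kronecker_mulVec_vec, transpose_one, Matrix.mul_one]
  exact congrFun (congrFun h j) r

lemma regressionCoeff_kronecker {S : Matrix ι ι R} {D : Matrix κ κ R}
    {Pr : ι → Prop} {Pc : κ → Prop} {PO : ι × κ → Prop}
    [DecidablePred Pr] [DecidablePred Pc] [DecidablePred PO] (hO : ∀ q, PO q ↔ Pr q.1 ∨ Pc q.2)
    (hS : IsUnit (S.submatrix Subtype.val Subtype.val : Matrix {a // Pr a} {a // Pr a} R).det)
    (hD : IsUnit (D.submatrix Subtype.val Subtype.val : Matrix {j // Pc j} {j // Pc j} R).det)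
    (hSD : IsUnit ((S ⊗ₖ D).submatrix Subtype.val Subtype.val :
      Matrix {q // PO q} {q // PO q} R).det) :
    regressionCoeff (S ⊗ₖ D) PO =
      twoStepRegressionCoeff (regressionCoeff S Pr) (regressionCoeff D Pc) := by
  refine regressionCoeff_eq_of_mul_self hSD ?_ ?_
  · rintro ⟨r, j⟩ ⟨a, j'⟩ hq
    obtain ⟨ha, hj'⟩ : ¬Pr a ∧ ¬Pc j' := by simpa [not_or] using (hO (a, j')).not.1 hq
    simp [twoStepRegressionCoeff, regressionCoeff_apply_of_not ha,
      regressionCoeff_apply_of_not hj']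
  · rintro ⟨r, j⟩ ⟨a, j'⟩ hq
    rw [twoStepRegressionCoeff_mul_kronecker]
    simp only [add_apply, sub_apply, kroneckerMap_apply]
    rcases (hO (a, j')).1 hq with ha | hj'
    · rw [regressionCoeff_mul_self_of_mem hS r ha]
      ring
    · rw [regressionCoeff_mul_self_of_mem hD j hj']
      ring

end Kronecker

end Matrix

theorem two_step_conditional_row_general
    (n p : ℕ)
    (Sig : Matrix (Fin n) (Fin n) ℝ) (Del : Matrix (Fin p) (Fin p) ℝ)
    (hSig : Sig.PosDef) (hDel : Del.PosDef)
    (M : Matrix (Fin n) (Fin p) ℝ)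
    (Om : Matrix (Fin n × Fin p) (Fin n × Fin p) ℝ)
    (hOm : ∀ q q' : Fin n × Fin p, Om q q' = Sig q.1 q'.1 * Del q.2 q'.2)
    (i0 : Fin n) (mi : Finset (Fin p))
    (x : Matrix (Fin n) (Fin p) ℝ)
    (Skk : Matrix {a : Fin n // a ≠ i0} {a : Fin n // a ≠ i0} ℝ)
    (hSkk : ∀ a b, Skk a b = Sig a.1 b.1)
    (ψ : Fin p → ℝ)
    (hψ : ∀ j, ψ j = M i0 j +
      (fun a : {a : Fin n // a ≠ i0} => Sig i0 a.1) ⬝ᵥ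
        (Skk⁻¹ *ᵥ fun b : {a : Fin n // a ≠ i0} => x b.1 j - M b.1 j))
    (γ : ℝ)
    (hγ : γ = Sig i0 i0 -
      (fun a : {a : Fin n // a ≠ i0} => Sig i0 a.1) ⬝ᵥ
        (Skk⁻¹ *ᵥ fun b : {a : Fin n // a ≠ i0} => Sig b.1 i0))
    (Γ : Matrix (Fin p) (Fin p) ℝ) (hΓ : Γ = γ • Del)
    -- blocks of Ω with respect to S = {i0} × m_i and O = Sᶜ
    (OmSS : Matrix {q : Fin n × Fin p // q.1 = i0 ∧ q.2 ∈ mi}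
                   {q : Fin n × Fin p // q.1 = i0 ∧ q.2 ∈ mi} ℝ)
    (hOmSS : ∀ a b, OmSS a b = Om a.1 b.1)
    (OmSO : Matrix {q : Fin n × Fin p // q.1 = i0 ∧ q.2 ∈ mi}
                   {q : Fin n × Fin p // ¬(q.1 = i0 ∧ q.2 ∈ mi)} ℝ)
    (hOmSO : ∀ a b, OmSO a b = Om a.1 b.1)
    (OmOS : Matrix {q : Fin n × Fin p // ¬(q.1 = i0 ∧ q.2 ∈ mi)}
                   {q : Fin n × Fin p // q.1 = i0 ∧ q.2 ∈ mi} ℝ)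
    (hOmOS : ∀ a b, OmOS a b = Om a.1 b.1)
    (OmOO : Matrix {q : Fin n × Fin p // ¬(q.1 = i0 ∧ q.2 ∈ mi)}
                   {q : Fin n × Fin p // ¬(q.1 = i0 ∧ q.2 ∈ mi)} ℝ)
    (hOmOO : ∀ a b, OmOO a b = Om a.1 b.1)
    -- blocks of Γ with respect to m_i and o_i = m_iᶜ
    (Gmm : Matrix {j : Fin p // j ∈ mi} {j : Fin p // j ∈ mi} ℝ)
    (hGmm : ∀ a b, Gmm a b = Γ a.1 b.1)
    (Gmo : Matrix {j : Fin p // j ∈ mi} {j : Fin p // j ∉ mi} ℝ)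
    (hGmo : ∀ a b, Gmo a b = Γ a.1 b.1)
    (Gom : Matrix {j : Fin p // j ∉ mi} {j : Fin p // j ∈ mi} ℝ)
    (hGom : ∀ a b, Gom a b = Γ a.1 b.1)
    (Goo : Matrix {j : Fin p // j ∉ mi} {j : Fin p // j ∉ mi} ℝ)
    (hGoo : ∀ a b, Goo a b = Γ a.1 b.1) :
    0 < γ ∧ OmOO.PosDef ∧
    (∀ q : {q : Fin n × Fin p // q.1 = i0 ∧ q.2 ∈ mi},
      M q.1.1 q.1.2 +
        (OmSO *ᵥ (OmOO⁻¹ *ᵥ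
          fun b : {q : Fin n × Fin p // ¬(q.1 = i0 ∧ q.2 ∈ mi)} =>
            x b.1.1 b.1.2 - M b.1.1 b.1.2)) q
      = ψ q.1.2 +
        (Gmo *ᵥ (Goo⁻¹ *ᵥ
          fun b : {j : Fin p // j ∉ mi} => x i0 b.1 - ψ b.1)) ⟨q.1.2, q.2.2⟩) ∧
    (∀ a b : {q : Fin n × Fin p // q.1 = i0 ∧ q.2 ∈ mi},
      (OmSS - OmSO * OmOO⁻¹ * OmOS) a b
        = (Gmm - Gmo * Goo⁻¹ * Gom) ⟨a.1.2, a.2.2⟩ ⟨b.1.2, b.2.2⟩) := by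
  obtain rfl : Om = Sig ⊗ₖ Del := Matrix.ext hOm
  obtain rfl : Skk = Sig.submatrix Subtype.val Subtype.val := Matrix.ext hSkk
  obtain rfl : OmSS = (Sig ⊗ₖ Del).submatrix Subtype.val Subtype.val := Matrix.ext hOmSS
  obtain rfl : OmSO = (Sig ⊗ₖ Del).submatrix Subtype.val Subtype.val := Matrix.ext hOmSO
  obtain rfl : OmOS = (Sig ⊗ₖ Del).submatrix Subtype.val Subtype.val := Matrix.ext hOmOS
  obtain rfl : OmOO = (Sig ⊗ₖ Del).submatrix Subtype.val Subtype.val := Matrix.ext hOmOO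
  subst hΓ
  obtain rfl : Gmm = (γ • Del).submatrix Subtype.val Subtype.val := Matrix.ext hGmm
  obtain rfl : Gmo = (γ • Del).submatrix Subtype.val Subtype.val := Matrix.ext hGmo
  obtain rfl : Gom = (γ • Del).submatrix Subtype.val Subtype.val := Matrix.ext hGom
  obtain rfl : Goo = (γ • Del).submatrix Subtype.val Subtype.val := Matrix.ext hGoo
  set Rs := regressionCoeff Sig (· ≠ i0)
  set Rd := regressionCoeff Del (· ∉ mi)
  have hγ' : γ = Sig i0 i0 - (Rs * Sig) i0 i0 := by rw [hγ, regressionCoeff_mul_apply]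
  have hψ' : ψ = fun j => M i0 j + (Rs * (x - M)) i0 j := by
    ext j
    rw [hψ, regressionCoeff_mul_apply]
    rfl
  have hγpos : 0 < γ := hγ' ▸ hSig.sub_regressionCoeff_mul_self_pos (not_not.2 rfl)
  have hRΓ : regressionCoeff (γ • Del) (· ∉ mi) = Rd :=
    regressionCoeff_smul hγpos.ne'.isUnit (hDel.isUnit_det_submatrix _)
  have hR : regressionCoeff (Sig ⊗ₖ Del) (fun q => ¬(q.1 = i0 ∧ q.2 ∈ mi)) =
      twoStepRegressionCoeff Rs Rd :=
    regressionCoeff_kronecker (fun _ => not_and_or) (hSig.isUnit_det_submatrix _)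
      (hDel.isUnit_det_submatrix _) ((hSig.kronecker hDel).isUnit_det_submatrix _)
  refine ⟨hγpos, (hSig.kronecker hDel).submatrix Subtype.val_injective, ?_, ?_⟩
  · rintro ⟨⟨r, j⟩, hr, -⟩
    obtain rfl : r = i0 := hr
    rw [submatrix_mulVec_inv_mulVec (v := fun q : Fin n × Fin p => x q.1 q.2 - M q.1 q.2),
      submatrix_mulVec_inv_mulVec (v := fun j => x r j - ψ j), hR, hRΓ]
    simp only [← Matrix.sub_apply (A := x)]
    rw [twoStepRegressionCoeff_mulVec_apply, hψ']
    simp only [Matrix.sub_apply, sub_sub, add_assoc]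
  · rintro ⟨⟨r, j⟩, hr, -⟩ ⟨⟨r', l⟩, hr', -⟩
    obtain rfl : r = i0 := hr
    obtain rfl : r' = r := hr'
    rw [submatrix_sub_mul_inv_mul, submatrix_sub_mul_inv_mul, hR, hRΓ,
      kronecker_sub_twoStepRegressionCoeff_mul, Matrix.mul_smul, ← smul_sub]
    simp [hγ']

/-- **row version of the two-step conditional distribution.**
For the mean-restricted matrix-variate normal with mean `M = ν1ᵀ + 1μᵀ` and
covariance `Ω = Δ⊗Σ`, fix a row `i`, let `k` be the remaining rows and let the
columns be partitioned into `m_i` and `o_i`.  With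
`ψ = M_{i,·} + Σ_{i,k}Σ_{k,k}⁻¹(x_{k,·} − M_{k,·})`,
`γ = Σ_{i,i} − Σ_{i,k}Σ_{k,k}⁻¹Σ_{k,i}` (a positive scalar) and `Γ = γ·Δ`,
the submatrix `Ω_{O,O}` (with `S = {i}×m_i`, `O = Sᶜ`) is positive definite and the
one-step Gaussian conditioning formulas agree with the two-step formulas:
(a) conditional mean, (b) conditional covariance. -/
theorem two_step_conditional_row
    (n p : ℕ)
    (Sig : Matrix (Fin n) (Fin n) ℝ) (Del : Matrix (Fin p) (Fin p) ℝ)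
    (hSig : Sig.PosDef) (hDel : Del.PosDef)
    (ν : Fin n → ℝ) (μ : Fin p → ℝ)
    (M : Matrix (Fin n) (Fin p) ℝ) (hM : ∀ i j, M i j = ν i + μ j)
    (Om : Matrix (Fin n × Fin p) (Fin n × Fin p) ℝ)
    (hOm : ∀ q q' : Fin n × Fin p, Om q q' = Sig q.1 q'.1 * Del q.2 q'.2)
    (i0 : Fin n) (mi : Finset (Fin p))
    (x : Matrix (Fin n) (Fin p) ℝ)
    (Skk : Matrix {a : Fin n // a ≠ i0} {a : Fin n // a ≠ i0} ℝ)
    (hSkk : ∀ a b, Skk a b = Sig a.1 b.1)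
    (ψ : Fin p → ℝ)
    (hψ : ∀ j, ψ j = M i0 j +
      (fun a : {a : Fin n // a ≠ i0} => Sig i0 a.1) ⬝ᵥ
        (Skk⁻¹ *ᵥ fun b : {a : Fin n // a ≠ i0} => x b.1 j - M b.1 j))
    (γ : ℝ)
    (hγ : γ = Sig i0 i0 -
      (fun a : {a : Fin n // a ≠ i0} => Sig i0 a.1) ⬝ᵥ
        (Skk⁻¹ *ᵥ fun b : {a : Fin n // a ≠ i0} => Sig b.1 i0))
    (Γ : Matrix (Fin p) (Fin p) ℝ) (hΓ : Γ = γ • Del)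
    -- blocks of Ω with respect to S = {i0} × m_i and O = Sᶜ
    (OmSS : Matrix {q : Fin n × Fin p // q.1 = i0 ∧ q.2 ∈ mi}
                   {q : Fin n × Fin p // q.1 = i0 ∧ q.2 ∈ mi} ℝ)
    (hOmSS : ∀ a b, OmSS a b = Om a.1 b.1)
    (OmSO : Matrix {q : Fin n × Fin p // q.1 = i0 ∧ q.2 ∈ mi}
                   {q : Fin n × Fin p // ¬(q.1 = i0 ∧ q.2 ∈ mi)} ℝ)
    (hOmSO : ∀ a b, OmSO a b = Om a.1 b.1)
    (OmOS : Matrix {q : Fin n × Fin p // ¬(q.1 = i0 ∧ q.2 ∈ mi)}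
                   {q : Fin n × Fin p // q.1 = i0 ∧ q.2 ∈ mi} ℝ)
    (hOmOS : ∀ a b, OmOS a b = Om a.1 b.1)
    (OmOO : Matrix {q : Fin n × Fin p // ¬(q.1 = i0 ∧ q.2 ∈ mi)}
                   {q : Fin n × Fin p // ¬(q.1 = i0 ∧ q.2 ∈ mi)} ℝ)
    (hOmOO : ∀ a b, OmOO a b = Om a.1 b.1)
    -- blocks of Γ with respect to m_i and o_i = m_iᶜ
    (Gmm : Matrix {j : Fin p // j ∈ mi} {j : Fin p // j ∈ mi} ℝ)
    (hGmm : ∀ a b, Gmm a b = Γ a.1 b.1)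
    (Gmo : Matrix {j : Fin p // j ∈ mi} {j : Fin p // j ∉ mi} ℝ)
    (hGmo : ∀ a b, Gmo a b = Γ a.1 b.1)
    (Gom : Matrix {j : Fin p // j ∉ mi} {j : Fin p // j ∈ mi} ℝ)
    (hGom : ∀ a b, Gom a b = Γ a.1 b.1)
    (Goo : Matrix {j : Fin p // j ∉ mi} {j : Fin p // j ∉ mi} ℝ)
    (hGoo : ∀ a b, Goo a b = Γ a.1 b.1) :
    0 < γ ∧ OmOO.PosDef ∧
    (∀ q : {q : Fin n × Fin p // q.1 = i0 ∧ q.2 ∈ mi},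
      M q.1.1 q.1.2 +
        (OmSO *ᵥ (OmOO⁻¹ *ᵥ
          fun b : {q : Fin n × Fin p // ¬(q.1 = i0 ∧ q.2 ∈ mi)} =>
            x b.1.1 b.1.2 - M b.1.1 b.1.2)) q
      = ψ q.1.2 +
        (Gmo *ᵥ (Goo⁻¹ *ᵥ
          fun b : {j : Fin p // j ∉ mi} => x i0 b.1 - ψ b.1)) ⟨q.1.2, q.2.2⟩) ∧
    (∀ a b : {q : Fin n × Fin p // q.1 = i0 ∧ q.2 ∈ mi},
      (OmSS - OmSO * OmOO⁻¹ * OmOS) a b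
        = (Gmm - Gmo * Goo⁻¹ * Gom) ⟨a.1.2, a.2.2⟩ ⟨b.1.2, b.2.2⟩) :=
  two_step_conditional_row_general n p Sig Del hSig hDel M Om hOm i0 mi x Skk hSkk ψ hψ γ hγ Γ hΓ
    OmSS hOmSS OmSO hOmSO OmOS hOmOS OmOO hOmOO Gmm hGmm Gmo hGmo Gom hGom Goo hGoo
end

section
/- Let Σ ∈ ℝ^{n×n} and Δ ∈ ℝ^{p×p} be symmetric positive definite, Ω = Δ⊗Σ (so Ω is positive definite on ℝ^{np} indexed by pairs (i,j)), μ ∈ ℝ^{np}, and let the index set {1,…,n}×{1,…,p} be partitioned into a missing set m and observed set o, with m_i = {j : (i,j) ∈ m} the missing entries of row i and m_j = {i : (i,j) ∈ m} those of column j. Fix x_o ∈ ℝ^{o} and let f(z) = (v − μ)ᵀΩ⁻¹(v − μ) for z ∈ ℝ^{m}, where v agrees with z on m and with x_o on o. Consider the Alternating Conditional Expectations iteration: starting from any z⁽⁰⁾ ∈ ℝ^{m}, each iteration first cycles through the rows i = 1,…,n, replacing the block of coordinates {i}×m_i of the current iterate by the unique minimizer of f over that block with all other coordinates held fixed (equivalently,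 by the Gaussian conditional mean of X_{i,m_i} given all other current values), and then cycles through the columns j = 1,…,p, doing the same for the blocks m_j×{j}. Then the sequence of iterates z⁽ᵏ⁾ converges as k → ∞ to z* = μ_m + Ω_{m,o}·Ω_{o,o}⁻¹·(x_o − μ_o), the conditional expectation E(X_m | X_o = x_o) for vec(X) ~ N(μ, Ω). -/
/-!
Since the gradient of `f` vanishes at the conditional mean `z*`, `f z = f z* + (z - z*)ᵀ A (z - z*)`
with `A = (Ω⁻¹)_{m,m}` positive definite. In the error `z - z*`, each block step is the
`A`-orthogonal projection that kills the gradient on its block: it is linear and never increases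
the `A`-energy. A whole sweep strictly decreases the energy of a nonzero error, because the row
blocks alone already cover every missing entry, and by compactness of the unit sphere a linear map
strictly decreasing a positive definite form contracts it by a factor `r < 1`. So the errors tend
to `0` geometrically.
-/

open Matrix Filter Topology

section Support

variable {N ι : Type*} [Fintype N] {P : N → Prop} [DecidablePred P]

theorem dotProduct_eq_dotProduct_subtype {x : N → ℝ} (hx : ∀ q, ¬ P q → x q = 0) (u : N → ℝ) :
    x ⬝ᵥ u = (fun a : Subtype P => x a) ⬝ᵥ fun a => u a := by
  rw [dotProduct, ← Fintype.sum_subtype_add_sum_subtype P, add_eq_left.mpr]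
  · rfl
  · exact Finset.sum_eq_zero fun b _ => by rw [hx b b.2, zero_mul]

theorem mulVec_eq_submatrix_mulVec (M : Matrix ι N ℝ) {y : N → ℝ} (hy : ∀ q, ¬ P q → y q = 0) :
    M *ᵥ y = M.submatrix id Subtype.val *ᵥ fun a : Subtype P => y a := by
  ext i
  simp only [mulVec, dotProduct_comm (fun j => M i j), dotProduct_eq_dotProduct_subtype hy]
  exact dotProduct_comm _ _

end Support

namespace Matrix.IsSymm

variable {ι : Type*} [Fintype ι] {A : Matrix ι ι ℝ}

theorem dotProduct_mulVec_comm (hA : A.IsSymm) (x y : ι → ℝ) :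
    x ⬝ᵥ (A *ᵥ y) = y ⬝ᵥ (A *ᵥ x) := by
  rw [dotProduct_mulVec, ← mulVec_transpose, hA.eq, dotProduct_comm]

theorem add_dotProduct_mulVec_add (hA : A.IsSymm) (x y : ι → ℝ) :
    (x + y) ⬝ᵥ (A *ᵥ (x + y)) = x ⬝ᵥ (A *ᵥ x) + 2 * (y ⬝ᵥ (A *ᵥ x)) + y ⬝ᵥ (A *ᵥ y) := by
  simp only [mulVec_add, dotProduct_add, add_dotProduct, hA.dotProduct_mulVec_comm x y]
  ring

end Matrix.IsSymm

theorem Matrix.PosSemidef.isSymm {ι : Type*} {A : Matrix ι ι ℝ} (hA : A.PosSemidef) : A.IsSymm :=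
  isHermitian_iff_isSymm.mp hA.isHermitian

section Gaussian

variable {N : Type*} [Fintype N] {P : N → Prop} [DecidablePred P]

/-- `w = Ω t'`, where `t'` extends `Ω_{Pᶜ,Pᶜ}⁻¹ w_{Pᶜ}` by zero. -/
theorem inv_mulVec_apply_eq_zero_of_eq_regression [DecidableEq N] {Ω : Matrix N N ℝ}
    (hΩ : Ω.PosDef) {w : N → ℝ}
    (hw : ∀ a : Subtype P, w a = (Ω.submatrix (Subtype.val : Subtype P → N) Subtype.val *ᵥ
      ((Ω.submatrix (Subtype.val : {q // ¬ P q} → N) Subtype.val)⁻¹ *ᵥ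
        fun b : {q // ¬ P q} => w b)) a)
    (a : Subtype P) : (Ω⁻¹ *ᵥ w) a = 0 := by
  set Ωo := Ω.submatrix (Subtype.val : {q // ¬ P q} → N) Subtype.val
  set t := Ωo⁻¹ *ᵥ fun b : {q // ¬ P q} => w b
  set t' : N → ℝ := fun q => if h : P q then 0 else t ⟨q, h⟩
  have hΩo : IsUnit Ωo.det := (hΩ.submatrix Subtype.val_injective).det_pos.ne'.isUnit
  have hΩt : Ω *ᵥ t' = w := by
    have ht : (fun b : {q // ¬ P q} => t' b) = t := funext fun b => dif_neg b.2
    rw [mulVec_eq_submatrix_mulVec (P := fun q => ¬ P q) Ω fun q hq => dif_pos (not_not.mp hq), ht]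
    ext q
    by_cases hq : P q
    · exact (hw ⟨q, hq⟩).symm
    · have h : Ωo *ᵥ t = fun b : {q // ¬ P q} => w b := by
        rw [mulVec_mulVec, mul_nonsing_inv _ hΩo, one_mulVec]
      exact congrFun h ⟨q, hq⟩
  rw [← hΩt, mulVec_mulVec, nonsing_inv_mul _ hΩ.det_pos.ne'.isUnit, one_mulVec]
  simp [t', a.2]

theorem dotProduct_mulVec_add_of_support {B : Matrix N N ℝ} (hB : B.IsSymm) {w δ : N → ℝ}
    (hw : ∀ a : Subtype P, (B *ᵥ w) a = 0) (hδ : ∀ q, ¬ P q → δ q = 0) :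
    (w + δ) ⬝ᵥ (B *ᵥ (w + δ)) = w ⬝ᵥ (B *ᵥ w) +
      (fun a : Subtype P => δ a) ⬝ᵥ
        (B.submatrix (Subtype.val : Subtype P → N) Subtype.val *ᵥ fun a : Subtype P => δ a) := by
  have hcross : δ ⬝ᵥ (B *ᵥ w) = 0 := by
    rw [dotProduct_eq_dotProduct_subtype hδ]
    simp [hw, dotProduct]
  rw [hB.add_dotProduct_mulVec_add, hcross, dotProduct_eq_dotProduct_subtype hδ,
    mulVec_eq_submatrix_mulVec B hδ]
  simp only [mul_zero, add_zero]
  rfl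

end Gaussian

section BlockSolution

variable {ι : Type*} [Fintype ι] {A : Matrix ι ι ℝ} {Q : ι → Prop}

/-- One exact block step of Gauss–Seidel: for positive definite `A`, `e` minimizes `x ↦ xᵀ A x`
among the vectors that agree with `d` off `Q`. -/
def IsBlockSolution (A : Matrix ι ι ℝ) (Q : ι → Prop) (d e : ι → ℝ) : Prop :=
  (∀ a, ¬ Q a → e a = d a) ∧ ∀ a, Q a → (A *ᵥ e) a = 0

namespace IsBlockSolution

variable {d d' e e' : ι → ℝ}

theorem add (h : IsBlockSolution A Q d e) (h' : IsBlockSolution A Q d' e') :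
    IsBlockSolution A Q (d + d') (e + e') :=
  ⟨fun a ha => by simp [h.1 a ha, h'.1 a ha], fun a ha => by simp [mulVec_add, h.2 a ha, h'.2 a ha]⟩

theorem smul (h : IsBlockSolution A Q d e) (c : ℝ) : IsBlockSolution A Q (c • d) (c • e) :=
  ⟨fun a ha => by simp [h.1 a ha], fun a ha => by simp [mulVec_smul, h.2 a ha]⟩

theorem sub (h : IsBlockSolution A Q d e) (h' : IsBlockSolution A Q d' e') :
    IsBlockSolution A Q (d - d') (e - e') := by
  simpa [sub_eq_add_neg] using h.add (h'.smul (-1))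

theorem eq_zero (hA : A.PosDef) (h : IsBlockSolution A Q 0 e) : e = 0 := by
  by_contra he
  have hpos := hA.dotProduct_mulVec_pos he
  have hzero : e ⬝ᵥ (A *ᵥ e) = 0 := Finset.sum_eq_zero fun a _ => by
    by_cases ha : Q a
    · rw [h.2 a ha, mul_zero]
    · rw [h.1 a ha, Pi.zero_apply, zero_mul]
  rw [star_trivial, hzero] at hpos
  exact hpos.false

theorem unique (hA : A.PosDef) (h : IsBlockSolution A Q d e) (h' : IsBlockSolution A Q d e') :
    e = e' :=
  sub_eq_zero.mp ((sub_self d ▸ h.sub h').eq_zero hA)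

/-- Pythagoras: the step is an `A`-orthogonal projection. -/
theorem energy_eq (hA : A.IsSymm) (h : IsBlockSolution A Q d e) :
    d ⬝ᵥ (A *ᵥ d) = e ⬝ᵥ (A *ᵥ e) + (d - e) ⬝ᵥ (A *ᵥ (d - e)) := by
  have hcross : (d - e) ⬝ᵥ (A *ᵥ e) = 0 := Finset.sum_eq_zero fun a _ => by
    by_cases ha : Q a
    · rw [h.2 a ha, mul_zero]
    · rw [Pi.sub_apply, h.1 a ha, sub_self, zero_mul]
  conv_lhs => rw [← add_sub_cancel e d]
  rw [hA.add_dotProduct_mulVec_add, hcross]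
  ring

end IsBlockSolution

theorem isBlockSolution_of_forall_le [DecidableEq ι] (hA : A.IsSymm) {d e : ι → ℝ}
    (hoff : ∀ a, ¬ Q a → e a = d a)
    (hmin : ∀ e', (∀ a, ¬ Q a → e' a = d a) → e ⬝ᵥ (A *ᵥ e) ≤ e' ⬝ᵥ (A *ᵥ e')) :
    IsBlockSolution A Q d e := by
  refine ⟨hoff, fun a ha => ?_⟩
  have hquad : ∀ t : ℝ, 0 ≤ A a a * (t * t) + 2 * (A *ᵥ e) a * t + 0 := fun t => by
    have hle := hmin (e + Pi.single a t) fun b hb => by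
      rw [Pi.add_apply, Pi.single_eq_of_ne (fun h : b = a => hb (h ▸ ha)), add_zero, hoff b hb]
    rw [hA.add_dotProduct_mulVec_add, single_dotProduct, single_dotProduct, mulVec_single] at hle
    simp only [Pi.smul_apply, col_apply, MulOpposite.smul_eq_mul_unop, MulOpposite.unop_op] at hle
    linarith
  have hdiscrim := discrim_le_zero hquad
  rw [discrim] at hdiscrim
  nlinarith [sq_nonneg ((A *ᵥ e) a)]

theorem isLinearMap_of_isBlockSolution (hA : A.PosDef) {S : (ι → ℝ) → ι → ℝ}
    (hS : ∀ d, IsBlockSolution A Q d (S d)) : IsLinearMap ℝ S :=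
  ⟨fun x y => ((hS x).add (hS y)).unique hA (hS (x + y)) |>.symm,
    fun c x => ((hS x).smul c).unique hA (hS (c • x)) |>.symm⟩

end BlockSolution

theorem isLinearMap_foldl {R M κ : Type*} [Semiring R] [AddCommMonoid M] [Module R M]
    {S : κ → M → M} (hS : ∀ i, IsLinearMap R (S i)) (l : List κ) :
    IsLinearMap R fun x => l.foldl (fun u i => S i u) x := by
  induction l with
  | nil => exact ⟨fun _ _ => rfl, fun _ _ => rfl⟩
  | cons i l ih =>
    exact ⟨fun x y => by simp [(hS i).map_add, ih.map_add],
      fun c x => by simp [(hS i).map_smul, ih.map_smul]⟩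

section Sweep

variable {ι κ : Type*} [Fintype ι] {A : Matrix ι ι ℝ} {Q : κ → ι → Prop}
  {S : κ → (ι → ℝ) → ι → ℝ}

theorem energy_foldl_le (hA : A.PosSemidef) (hS : ∀ i d, IsBlockSolution A (Q i) d (S i d))
    (l : List κ) (d : ι → ℝ) :
    l.foldl (fun u i => S i u) d ⬝ᵥ (A *ᵥ l.foldl (fun u i => S i u) d) ≤ d ⬝ᵥ (A *ᵥ d) := by
  induction l generalizing d with
  | nil => exact le_rfl
  | cons i l ih =>
    have hstep := (hS i d).energy_eq hA.isSymm
    have hnonneg := hA.dotProduct_mulVec_nonneg (d - S i d)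
    rw [star_trivial] at hnonneg
    exact (ih (S i d)).trans (by linarith)

theorem forall_eq_of_energy_foldl_eq (hA : A.PosDef) (hS : ∀ i d, IsBlockSolution A (Q i) d (S i d))
    (l : List κ) (d : ι → ℝ)
    (heq : l.foldl (fun u i => S i u) d ⬝ᵥ (A *ᵥ l.foldl (fun u i => S i u) d) =
      d ⬝ᵥ (A *ᵥ d)) :
    ∀ i ∈ l, S i d = d := by
  induction l generalizing d with
  | nil => simp
  | cons i l ih =>
    rw [List.foldl_cons] at heq
    have hstep := (hS i d).energy_eq hA.posSemidef.isSymm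
    have hfold := energy_foldl_le hA.posSemidef hS l (S i d)
    have hnonneg := hA.posSemidef.dotProduct_mulVec_nonneg (S i d)
    have hfix : S i d = d := by
      by_contra hne
      have hpos := hA.dotProduct_mulVec_pos (sub_ne_zero.mpr (Ne.symm hne))
      rw [star_trivial] at hpos
      linarith
    rw [hfix] at heq
    exact List.forall_mem_cons.mpr ⟨hfix, ih d heq⟩

theorem energy_foldl_lt (hA : A.PosDef) (hS : ∀ i d, IsBlockSolution A (Q i) d (S i d))
    {l : List κ} (hcover : ∀ a, ∃ i ∈ l, Q i a) {d : ι → ℝ} (hd : d ≠ 0) :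
    l.foldl (fun u i => S i u) d ⬝ᵥ (A *ᵥ l.foldl (fun u i => S i u) d) < d ⬝ᵥ (A *ᵥ d) := by
  refine (energy_foldl_le hA.posSemidef hS l d).lt_of_ne fun heq => ?_
  have hfix := forall_eq_of_energy_foldl_eq hA hS l d heq
  have hAd : A *ᵥ d = 0 := funext fun a => by
    obtain ⟨i, hi, ha⟩ := hcover a
    simpa [hfix i hi] using (hS i d).2 a ha
  have hpos := hA.dotProduct_mulVec_pos hd
  rw [star_trivial, hAd, dotProduct_zero] at hpos
  exact hpos.false

end Sweep

section Homogeneous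

variable {E : Type*} [NormedAddCommGroup E] [NormedSpace ℝ E] {F D : E → ℝ}

theorem le_of_forall_mem_sphere (hF : ∀ (c : ℝ) x, F (c • x) = c ^ 2 * F x)
    (hD : ∀ (c : ℝ) x, D (c • x) = c ^ 2 * D x) (h : ∀ y ∈ Metric.sphere (0 : E) 1, F y ≤ D y)
    (x : E) : F x ≤ D x := by
  rcases eq_or_ne x 0 with rfl | hx
  · have hF₀ : F 0 = 0 := by simpa using hF 0 0
    have hD₀ : D 0 = 0 := by simpa using hD 0 0
    rw [hF₀, hD₀]
  · have hy : ‖x‖⁻¹ • x ∈ Metric.sphere (0 : E) 1 := by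
      simp [norm_smul, hx]
    have h := h _ hy
    rw [hF, hD] at h
    exact le_of_mul_le_mul_left h (by positivity)

variable [FiniteDimensional ℝ E]

theorem exists_pos_mul_norm_sq_le (hDc : Continuous D) (hD : ∀ (c : ℝ) x, D (c • x) = c ^ 2 * D x)
    (hDpos : ∀ x ≠ 0, 0 < D x) : ∃ ε > 0, ∀ x, ε * ‖x‖ ^ 2 ≤ D x := by
  have hF : ∀ (ε c : ℝ) (x : E), ε * ‖c • x‖ ^ 2 = c ^ 2 * (ε * ‖x‖ ^ 2) := fun ε c x => by
    rw [norm_smul, Real.norm_eq_abs, mul_pow, sq_abs]; ring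
  rcases (Metric.sphere (0 : E) 1).eq_empty_or_nonempty with hempty | hne
  · exact ⟨1, one_pos, le_of_forall_mem_sphere (hF 1) hD (by simp [hempty])⟩
  obtain ⟨y₀, hy₀, hmin⟩ := (isCompact_sphere (0 : E) 1).exists_isMinOn hne hDc.continuousOn
  refine ⟨D y₀, hDpos y₀ (ne_zero_of_mem_unit_sphere ⟨y₀, hy₀⟩),
    le_of_forall_mem_sphere (hF _) hD ?_⟩
  intro y hy
  rw [mem_sphere_zero_iff_norm.mp hy, one_pow, mul_one]
  exact hmin hy

theorem exists_lt_one_forall_le_mul (hFc : Continuous F) (hDc : Continuous D)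
    (hF : ∀ (c : ℝ) x, F (c • x) = c ^ 2 * F x) (hD : ∀ (c : ℝ) x, D (c • x) = c ^ 2 * D x)
    (hDpos : ∀ x ≠ 0, 0 < D x) (hlt : ∀ x ≠ 0, F x < D x) :
    ∃ r, 0 ≤ r ∧ r < 1 ∧ ∀ x, F x ≤ r * D x := by
  have hrD : ∀ r : ℝ, ∀ (c : ℝ) x, r * D (c • x) = c ^ 2 * (r * D x) := fun r c x => by
    rw [hD]; ring
  have hsphere : ∀ y ∈ Metric.sphere (0 : E) 1, y ≠ 0 := fun y hy =>
    ne_zero_of_mem_unit_sphere ⟨y, hy⟩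
  rcases (Metric.sphere (0 : E) 1).eq_empty_or_nonempty with hempty | hne
  · exact ⟨0, le_rfl, one_pos, le_of_forall_mem_sphere hF (hrD 0) (by simp [hempty])⟩
  obtain ⟨y₀, hy₀, hmax⟩ := (isCompact_sphere (0 : E) 1).exists_isMaxOn hne
    (hFc.continuousOn.div hDc.continuousOn fun y hy => (hDpos y (hsphere y hy)).ne')
  have hD₀ := hDpos y₀ (hsphere y₀ hy₀)
  refine ⟨max (F y₀ / D y₀) 0, le_max_right _ _,
    max_lt ((div_lt_one hD₀).mpr (hlt y₀ (hsphere y₀ hy₀))) one_pos,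
    le_of_forall_mem_sphere hF (hrD _) fun y hy => ?_⟩
  have hDy := hDpos y (hsphere y hy)
  calc F y ≤ F y₀ / D y₀ * D y := (div_le_iff₀ hDy).mp (hmax hy)
    _ ≤ max (F y₀ / D y₀) 0 * D y := by gcongr; exact le_max_left _ _

theorem tendsto_zero_of_lt_of_homogeneous (L : E →ₗ[ℝ] E) (hDc : Continuous D)
    (hD : ∀ (c : ℝ) x, D (c • x) = c ^ 2 * D x) (hDpos : ∀ x ≠ 0, 0 < D x)
    (hlt : ∀ x ≠ 0, D (L x) < D x) {d : ℕ → E} (hd : ∀ k, d (k + 1) = L (d k)) :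
    Tendsto d atTop (𝓝 0) := by
  obtain ⟨ε, hε, hcoer⟩ := exists_pos_mul_norm_sq_le hDc hD hDpos
  obtain ⟨r, hr₀, hr₁, hrL⟩ :=
    exists_lt_one_forall_le_mul (hDc.comp L.continuous_of_finiteDimensional) hDc
      (fun c x => by simp [hD]) hD hDpos hlt
  have hdecay : ∀ k, D (d k) ≤ r ^ k * D (d 0) := by
    intro k
    induction k with
    | zero => simp
    | succ k ih =>
      calc D (d (k + 1)) ≤ r * D (d k) := hd k ▸ hrL (d k)
        _ ≤ r * (r ^ k * D (d 0)) := by gcongr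
        _ = r ^ (k + 1) * D (d 0) := by ring
  have hbound : ∀ k, ‖d k‖ ^ 2 ≤ r ^ k * (D (d 0) / ε) := fun k => by
    rw [← mul_div_assoc, le_div_iff₀' hε]
    exact (hcoer (d k)).trans (hdecay k)
  have hgeom : Tendsto (fun k => r ^ k * (D (d 0) / ε)) atTop (𝓝 0) := by
    simpa using (tendsto_pow_atTop_nhds_zero_of_lt_one hr₀ hr₁).mul_const (D (d 0) / ε)
  have hsq := squeeze_zero (fun k => by positivity) hbound hgeom
  refine tendsto_zero_iff_norm_tendsto_zero.mpr ?_
  simpa using hsq.sqrt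

end Homogeneous

theorem tendsto_blockCoordinateDescent {ι κ : Type*} [Fintype ι] [DecidableEq ι]
    {A : Matrix ι ι ℝ} (hA : A.PosDef) {f : (ι → ℝ) → ℝ} {zstar : ι → ℝ}
    (hf : ∀ u, f u = f zstar + (u - zstar) ⬝ᵥ (A *ᵥ (u - zstar)))
    {Q : κ → ι → Prop} {T : κ → (ι → ℝ) → ι → ℝ}
    (hT : ∀ i w, (∀ a, ¬ Q i a → T i w a = w a) ∧
      ∀ u, (∀ a, ¬ Q i a → u a = w a) → f (T i w) ≤ f u)
    {l : List κ} (hcover : ∀ a, ∃ i ∈ l, Q i a)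
    {z : ℕ → ι → ℝ} (hz : ∀ k, z (k + 1) = l.foldl (fun u i => T i u) (z k)) :
    Tendsto z atTop (𝓝 zstar) := by
  set S : κ → (ι → ℝ) → ι → ℝ := fun i d => T i (zstar + d) - zstar
  have hS : ∀ i d, IsBlockSolution A (Q i) d (S i d) := fun i d =>
    isBlockSolution_of_forall_le hA.posSemidef.isSymm (fun a ha => by simp [S, (hT i _).1 a ha])
      fun e he => by
        have hle := (hT i (zstar + d)).2 (zstar + e) fun a ha => by simp [he a ha]
        rw [hf (T i _), hf (zstar + e), add_sub_cancel_left] at hle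
        exact le_of_add_le_add_left hle
  set G := IsLinearMap.mk' _
    (isLinearMap_foldl (fun i => isLinearMap_of_isBlockSolution hA (hS i)) l)
  have hG : ∀ k, z (k + 1) - zstar = G (z k - zstar) := fun k => by
    have hconj := List.foldl_hom (zstar + ·) (g₁ := fun u i => S i u) (g₂ := fun u i => T i u)
      (l := l) (init := z k - zstar) fun x i => by simp [S]
    rw [add_sub_cancel] at hconj
    rw [hz, hconj, add_sub_cancel_left, IsLinearMap.mk'_apply]
  have hconv := tendsto_zero_of_lt_of_homogeneous G (D := fun x => x ⬝ᵥ (A *ᵥ x))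
    (d := fun k => z k - zstar) (by fun_prop)
    (fun c x => by simp only [mulVec_smul, dotProduct_smul, smul_dotProduct, smul_eq_mul]; ring)
    (fun x hx => by simpa using hA.dotProduct_mulVec_pos hx)
    (fun x hx => energy_foldl_lt hA hS hcover hx) hG
  simpa using hconv.add_const zstar

/-- **Theorem 3: Alternating Conditional Expectations.**
For `Ω = Δ⊗Σ` positive definite (Σ, Δ symmetric positive definite), mean `μ`, a
partition of the entries into missing set `m` and observed set `o` with observed
values `x_o`, and the Gaussian quadratic form `f`, the alternating iteration that in
each sweep cycles through the rows and then through the columns, replacing each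
row-block `{i}×m_i` (resp. column-block `m_j×{j}`) of the current iterate by the
unique minimizer of `f` over that block with all other coordinates held fixed,
converges to the Gaussian conditional mean `z* = μ_m + Ω_{m,o}Ω_{o,o}⁻¹(x_o − μ_o)`. -/
theorem alternating_conditional_expectations_converges
    (n p : ℕ)
    (Sig : Matrix (Fin n) (Fin n) ℝ) (Del : Matrix (Fin p) (Fin p) ℝ)
    (hSig : Sig.PosDef) (hDel : Del.PosDef)
    (Om : Matrix (Fin n × Fin p) (Fin n × Fin p) ℝ)
    (hOm : ∀ q q' : Fin n × Fin p, Om q q' = Sig q.1 q'.1 * Del q.2 q'.2)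
    (μ : Fin n × Fin p → ℝ)
    (m : Finset (Fin n × Fin p))
    (xo : {q : Fin n × Fin p // q ∉ m} → ℝ)
    (v : ({q : Fin n × Fin p // q ∈ m} → ℝ) → Fin n × Fin p → ℝ)
    (hv : ∀ z q, v z q = if h : q ∈ m then z ⟨q, h⟩ else xo ⟨q, h⟩)
    (f : ({q : Fin n × Fin p // q ∈ m} → ℝ) → ℝ)
    (hf : ∀ z, f z = (fun q => v z q - μ q) ⬝ᵥ (Om⁻¹ *ᵥ fun q => v z q - μ q))
    -- row-block and column-block exact minimization steps
    (Rstep : Fin n → ({q : Fin n × Fin p // q ∈ m} → ℝ) →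
      ({q : Fin n × Fin p // q ∈ m} → ℝ))
    (hR : ∀ (i : Fin n) (w : {q : Fin n × Fin p // q ∈ m} → ℝ),
      (∀ a : {q : Fin n × Fin p // q ∈ m}, a.1.1 ≠ i → Rstep i w a = w a) ∧
      (∀ u : {q : Fin n × Fin p // q ∈ m} → ℝ,
        (∀ a : {q : Fin n × Fin p // q ∈ m}, a.1.1 ≠ i → u a = w a) →
        f (Rstep i w) ≤ f u))
    (Cstep : Fin p → ({q : Fin n × Fin p // q ∈ m} → ℝ) →
      ({q : Fin n × Fin p // q ∈ m} → ℝ))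
    (hC : ∀ (j : Fin p) (w : {q : Fin n × Fin p // q ∈ m} → ℝ),
      (∀ a : {q : Fin n × Fin p // q ∈ m}, a.1.2 ≠ j → Cstep j w a = w a) ∧
      (∀ u : {q : Fin n × Fin p // q ∈ m} → ℝ,
        (∀ a : {q : Fin n × Fin p // q ∈ m}, a.1.2 ≠ j → u a = w a) →
        f (Cstep j w) ≤ f u))
    -- the iterates: each sweep cycles through all rows, then all columns
    (z : ℕ → ({q : Fin n × Fin p // q ∈ m} → ℝ))
    (hz : ∀ k, z (k + 1) =
      (List.finRange p).foldl (fun u j => Cstep j u)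
        ((List.finRange n).foldl (fun u i => Rstep i u) (z k)))
    -- the Gaussian conditional mean
    (Omo : Matrix {q : Fin n × Fin p // q ∈ m} {q : Fin n × Fin p // q ∉ m} ℝ)
    (hOmo : ∀ a b, Omo a b = Om a.1 b.1)
    (Ooo : Matrix {q : Fin n × Fin p // q ∉ m} {q : Fin n × Fin p // q ∉ m} ℝ)
    (hOoo : ∀ a b, Ooo a b = Om a.1 b.1)
    (zstar : {q : Fin n × Fin p // q ∈ m} → ℝ)
    (hzstar : ∀ a, zstar a = μ a.1 +
      (Omo *ᵥ (Ooo⁻¹ *ᵥ fun b : {q : Fin n × Fin p // q ∉ m} => xo b - μ b.1)) a) :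
    Tendsto z atTop (𝓝 zstar) := by
  have hΩ : Om.PosDef := by
    have hkron : Om = Sig.kroneckerMap (· * ·) Del := Matrix.ext hOm
    exact hkron ▸ hSig.kronecker hDel
  have hres : ∀ a : {q // q ∈ m}, (Om⁻¹ *ᵥ fun q => v zstar q - μ q) a = 0 :=
    inv_mulVec_apply_eq_zero_of_eq_regression hΩ fun a => by
      have hobs : (fun b : {q // q ∉ m} => v zstar b - μ b) = fun b => xo b - μ b :=
        funext fun b => by rw [hv, dif_neg b.2]
      rw [hv, dif_pos a.2, hzstar, hobs, show Omo = Om.submatrix _ _ from Matrix.ext hOmo,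
        show Ooo = Om.submatrix _ _ from Matrix.ext hOoo, add_sub_cancel_left]
  have hdecomp : ∀ u, f u = f zstar +
      (u - zstar) ⬝ᵥ (Om⁻¹.submatrix Subtype.val Subtype.val *ᵥ (u - zstar)) := fun u => by
    have hsplit : (fun q => v u q - μ q) =
        (fun q => v zstar q - μ q) + fun q => v u q - v zstar q :=
      funext fun q => by simp
    have hδ : (fun a : {q // q ∈ m} => v u a - v zstar a) = u - zstar :=
      funext fun a => by simp [hv, a.2]
    rw [hf, hf, hsplit, dotProduct_mulVec_add_of_support hΩ.inv.posSemidef.isSymm hres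
      fun q hq => by simp [hv, hq], hδ]
    -- `Fintype ↥m` is found once as a finset coercion and once as a subtype; the two instances
    -- agree only propositionally
    convert rfl
  exact tendsto_blockCoordinateDescent (hΩ.inv.submatrix Subtype.val_injective) hdecomp
    (Q := Sum.elim (fun i a => a.1.1 = i) fun j a => a.1.2 = j)
    (T := Sum.elim Rstep Cstep) (fun b => b.rec hR hC)
    (l := (List.finRange n).map Sum.inl ++ (List.finRange p).map Sum.inr)
    (fun a => ⟨Sum.inl a.1.1, by simp, rfl⟩)
    (fun k => by rw [hz, List.foldl_append, List.foldl_map, List.foldl_map]; rfl)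
end
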